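/- arXiv:2006.06033 — 9 statements merged into one kernel-verified Lean document; each statement's English description precedes it below -/
import Mathlib

section
/- (Weak entropic duality, part of Theorem 2.1(4).) Let (φ,ψ) be admissible and let γ be a coupling of μ and ν that is absolutely continuous with respect to Lebesgue measure on E × E, with density ρ such that ρ log ρ is Lebesgue-integrable and c is γ-integrable. Then D_ε(φ,ψ) + ε ≤ ∫ c dγ + ε ∫ ρ log ρ. -/
open MeasureTheory
open scoped NNReal ENNReal

noncomputable section

abbrev E (d : ℕ) := EuclideanSpace ℝ (Fin d)

def cost {d : ℕ} (x y : E d) : ℝ := (1 / 2) * ‖x - y‖ ^ 2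

def Dent {d : ℕ} (ε : ℝ) (μ ν : Measure (E d)) (φ ψ : E d → ℝ) : ℝ :=
  (∫ x, φ x ∂μ) + (∫ y, ψ y ∂ν) -
    ε * ∫ r : E d × E d, Real.exp ((φ r.1 + ψ r.2 - cost r.1 r.2) / ε)

def Admissible {d : ℕ} (ε : ℝ) (μ ν : Measure (E d)) (φ ψ : E d → ℝ) : Prop :=
  Measurable φ ∧ Measurable ψ ∧ Integrable φ μ ∧ Integrable ψ ν ∧
    Integrable (fun r : E d × E d => Real.exp ((φ r.1 + ψ r.2 - cost r.1 r.2) / ε)) volume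

def IsCoupling {d : ℕ} (μ ν : Measure (E d)) (γ : Measure (E d × E d)) : Prop :=
  IsProbabilityMeasure γ ∧ γ.map Prod.fst = μ ∧ γ.map Prod.snd = ν

def Fent {d : ℕ} (ε : ℝ) (γ : Measure (E d × E d)) (ρ : E d × E d → ℝ) : ℝ :=
  (∫ r : E d × E d, cost r.1 r.2 ∂γ) + ε * ∫ r : E d × E d, ρ r * Real.log (ρ r)

lemma key_ineq (a t : ℝ) (ha : 0 ≤ a) :
    a * t - a * Real.log a ≤ Real.exp t - a := by
  rcases eq_or_lt_of_le ha with h | h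
  · rw [← h]; simp; positivity
  · have hlog : Real.log (Real.exp t / a) ≤ Real.exp t / a - 1 :=
      Real.log_le_sub_one_of_pos (by positivity)
    have heq : Real.log (Real.exp t / a) = t - Real.log a := by
      rw [Real.log_div (Real.exp_ne_zero t) (ne_of_gt h), Real.log_exp]
    rw [heq] at hlog
    have h2 := mul_le_mul_of_nonneg_left hlog h.le
    have h3 : a * (Real.exp t / a) = Real.exp t := mul_div_cancel₀ _ (ne_of_gt h)
    nlinarith

theorem weak_entropic_duality {d : ℕ} (hd : 1 ≤ d) {ε : ℝ} (hε : 0 < ε)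
    (μ ν : Measure (E d)) [IsProbabilityMeasure μ] [IsProbabilityMeasure ν]
    (φ ψ : E d → ℝ) (hadm : Admissible ε μ ν φ ψ)
    (γ : Measure (E d × E d)) (hγ : IsCoupling μ ν γ)
    (ρ : E d × E d → ℝ) (hρm : Measurable ρ) (hρ0 : ∀ r, 0 ≤ ρ r)
    (hγρ : γ = volume.withDensity fun r => ENNReal.ofReal (ρ r))
    (hent : Integrable (fun r => ρ r * Real.log (ρ r)) volume)
    (hcost : Integrable (fun r : E d × E d => cost r.1 r.2) γ) :
    Dent ε μ ν φ ψ + ε ≤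
      (∫ r : E d × E d, cost r.1 r.2 ∂γ) +
        ε * ∫ r : E d × E d, ρ r * Real.log (ρ r) := by
  obtain ⟨hφm, hψm, hφi, hψi, hexp⟩ := hadm
  obtain ⟨hprob, hfst, hsnd⟩ := hγ
  set g : E d × E d → ℝ := fun r => φ r.1 + ψ r.2 - cost r.1 r.2 with hg
  -- lintegral of density is 1
  have hl1 : ∫⁻ r : E d × E d, ENNReal.ofReal (ρ r) = 1 := by
    have h := congrArg (fun m : Measure (E d × E d) => m Set.univ) hγρ
    simp only [measure_univ] at h
    rw [withDensity_apply _ MeasurableSet.univ, Measure.restrict_univ] at h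
    exact h.symm
  -- ρ is integrable
  have hρi : Integrable ρ (volume : Measure (E d × E d)) := by
    refine ⟨hρm.aestronglyMeasurable, ?_⟩
    rw [hasFiniteIntegral_iff_norm]
    have : ∀ r : E d × E d, ENNReal.ofReal ‖ρ r‖ = ENNReal.ofReal (ρ r) := fun r => by
      rw [Real.norm_of_nonneg (hρ0 r)]
    simp_rw [this, hl1]
    exact ENNReal.one_lt_top
  -- ∫ρ = 1
  have hρ1 : ∫ r : E d × E d, ρ r = 1 := by
    rw [integral_eq_lintegral_of_nonneg_ae (ae_of_all _ hρ0) hρm.aestronglyMeasurable, hl1]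
    simp
  -- transfer integrability of φ,ψ along marginals
  have hφγ : Integrable (fun r : E d × E d => φ r.1) γ := by
    rw [← hfst] at hφi
    exact (integrable_map_measure hφm.aestronglyMeasurable measurable_fst.aemeasurable).mp hφi
  have hψγ : Integrable (fun r : E d × E d => ψ r.2) γ := by
    rw [← hsnd] at hψi
    exact (integrable_map_measure hψm.aestronglyMeasurable measurable_snd.aemeasurable).mp hψi
  have hφeq : ∫ x, φ x ∂μ = ∫ r : E d × E d, φ r.1 ∂γ := by
    rw [← hfst, integral_map measurable_fst.aemeasurable hφm.aestronglyMeasurable]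
  have hψeq : ∫ y, ψ y ∂ν = ∫ r : E d × E d, ψ r.2 ∂γ := by
    rw [← hsnd, integral_map measurable_snd.aemeasurable hψm.aestronglyMeasurable]
  have hGγ : Integrable g γ := (hφγ.add hψγ).sub hcost
  have hGsplit : ∫ r, g r ∂γ =
      (∫ x, φ x ∂μ) + (∫ y, ψ y ∂ν) - ∫ r : E d × E d, cost r.1 r.2 ∂γ := by
    have hadd : Integrable (fun r : E d × E d => φ r.1 + ψ r.2) γ := hφγ.add hψγ
    rw [hφeq, hψeq]
    simp only [hg]
    rw [integral_sub hadd hcost, integral_add hφγ hψγ]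
  -- withDensity rewriting
  have hwd : γ = volume.withDensity fun r => ((Real.toNNReal (ρ r) : ℝ≥0) : ℝ≥0∞) := hγρ
  have hsmul : ∀ r : E d × E d, (Real.toNNReal (ρ r) : ℝ≥0) • g r = ρ r * g r := fun r => by
    rw [NNReal.smul_def, Real.coe_toNNReal _ (hρ0 r), smul_eq_mul]
  have hρg_int : Integrable (fun r : E d × E d => ρ r * g r) volume := by
    rw [hwd] at hGγ
    have := (integrable_withDensity_iff_integrable_smul hρm.real_toNNReal).mp hGγ
    simpa only [hsmul] using this
  have hρg_eq : ∫ r, g r ∂γ = ∫ r : E d × E d, ρ r * g r := by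
    rw [hwd, integral_withDensity_eq_integral_smul hρm.real_toNNReal]
    exact integral_congr_ae (ae_of_all _ hsmul)
  -- pointwise inequality and integral inequality
  have hpt : ∀ r : E d × E d,
      ρ r * (g r / ε) - ρ r * Real.log (ρ r) ≤ Real.exp (g r / ε) - ρ r :=
    fun r => key_ineq (ρ r) (g r / ε) (hρ0 r)
  have hint1 : Integrable (fun r : E d × E d => ρ r * (g r / ε) - ρ r * Real.log (ρ r)) volume := by
    have h1 : (fun r : E d × E d => ρ r * (g r / ε)) = fun r => (ρ r * g r) / ε :=
      funext fun r => (mul_div_assoc _ _ _).symm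
    exact (h1 ▸ hρg_int.div_const ε).sub hent
  have hint2 : Integrable (fun r : E d × E d => Real.exp (g r / ε) - ρ r) volume := hexp.sub hρi
  have hIle : ∫ r : E d × E d, (ρ r * (g r / ε) - ρ r * Real.log (ρ r)) ≤
      ∫ r : E d × E d, (Real.exp (g r / ε) - ρ r) :=
    integral_mono hint1 hint2 hpt
  have h1 : (fun r : E d × E d => ρ r * (g r / ε)) = fun r => (ρ r * g r) / ε :=
    funext fun r => (mul_div_assoc _ _ _).symm
  rw [integral_sub (h1 ▸ hρg_int.div_const ε) hent, integral_sub hexp hρi, hρ1] at hIle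
  rw [show (fun r : E d × E d => ρ r * (g r / ε)) = fun r => (ρ r * g r) / ε from h1,
    integral_div] at hIle
  have hfin : ∫ r : E d × E d, ρ r * g r ≤
      ((∫ r : E d × E d, Real.exp (g r / ε)) - 1 + ∫ r : E d × E d, ρ r * Real.log (ρ r)) * ε :=
    (div_le_iff₀ hε).mp (by linarith)
  have hA : (∫ x, φ x ∂μ) + (∫ y, ψ y ∂ν) =
      (∫ r : E d × E d, cost r.1 r.2 ∂γ) + ∫ r : E d × E d, ρ r * g r := by
    rw [← hρg_eq]; linarith [hGsplit]
  unfold Dent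
  nlinarith [hfin, hA]
end
end

section
/- (Duality attainment, Theorem 2.1(3)⇒(4).) Let (φ,ψ) be admissible, suppose the function ρ(x,y) := exp((φ(x)+ψ(y)−c(x,y))/ε) is the density of a coupling γ of μ and ν (i.e. γ = ρ · Lebesgue is a probability measure on E × E with marginals μ and ν), and suppose c is γ-integrable. Then D_ε(φ,ψ) + ε = ∫ c dγ + ε ∫ ρ log ρ. -/
open MeasureTheory

noncomputable section

theorem entropic_duality_attainment {d : ℕ} (hd : 1 ≤ d) {ε : ℝ} (hε : 0 < ε)
    (μ ν : Measure (E d)) [IsProbabilityMeasure μ] [IsProbabilityMeasure ν]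
    (φ ψ : E d → ℝ) (hadm : Admissible ε μ ν φ ψ)
    (ρ : E d × E d → ℝ)
    (hρ : ρ = fun r => Real.exp ((φ r.1 + ψ r.2 - cost r.1 r.2) / ε))
    (γ : Measure (E d × E d))
    (hγdef : γ = volume.withDensity fun r => ENNReal.ofReal (ρ r))
    (hγ : IsCoupling μ ν γ)
    (hcost : Integrable (fun r : E d × E d => cost r.1 r.2) γ) :
    Dent ε μ ν φ ψ + ε =
      (∫ r : E d × E d, cost r.1 r.2 ∂γ) +
        ε * ∫ r : E d × E d, ρ r * Real.log (ρ r) := by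
  obtain ⟨hφm, hψm, hφi, hψi, hρi⟩ := hadm
  obtain ⟨hγprob, hfst, hsnd⟩ := hγ
  have hεne : ε ≠ 0 := ne_of_gt hε
  set g : E d × E d → ℝ := fun r => (φ r.1 + ψ r.2 - cost r.1 r.2) / ε with hg
  have hρ' : ρ = fun r => Real.exp (g r) := hρ
  have hρnn : ∀ r, 0 ≤ ρ r := by intro r; rw [hρ']; exact (Real.exp_pos _).le
  have hcostm : Measurable fun r : E d × E d => cost r.1 r.2 := by
    simp only [cost]
    exact (continuous_const.mul ((continuous_fst.sub continuous_snd).norm.pow 2)).measurable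
  have hgm : Measurable g := by
    exact (((hφm.comp measurable_fst).add (hψm.comp measurable_snd)).sub hcostm).div_const ε
  have hρm : Measurable ρ := by rw [hρ']; exact Real.measurable_exp.comp hgm
  -- ∫ exp = 1
  have hS : (∫ r : E d × E d, Real.exp ((φ r.1 + ψ r.2 - cost r.1 r.2) / ε)) = 1 := by
    have h1 : γ Set.univ = 1 := hγprob.measure_univ
    rw [hγdef, withDensity_apply _ MeasurableSet.univ] at h1
    have : (∫ r : E d × E d, ρ r) = (∫⁻ r : E d × E d, ENNReal.ofReal (ρ r)).toReal := by
      rw [integral_eq_lintegral_of_nonneg_ae (Filter.Eventually.of_forall hρnn)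
        hρm.aestronglyMeasurable]
    rw [← hρ, this]
    simp only [Measure.restrict_univ] at h1
    rw [h1]; simp
  -- change of variables to γ
  have hwd : ∀ (f : E d × E d → ℝ),
      (∫ r, f r ∂γ) = ∫ r : E d × E d, ρ r * f r := by
    intro f
    rw [hγdef]
    have : (fun r : E d × E d => ENNReal.ofReal (ρ r))
        = fun r => ((Real.toNNReal (ρ r) : NNReal) : ENNReal) := rfl
    rw [this, integral_withDensity_eq_integral_smul (by exact hρm.real_toNNReal)]
    congr 1
    ext r
    simp [NNReal.smul_def, Real.coe_toNNReal _ (hρnn r)]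
  -- ∫ ρ log ρ = ∫ g dγ
  have hI : (∫ r : E d × E d, ρ r * Real.log (ρ r)) = ∫ r, g r ∂γ := by
    rw [hwd]
    congr 1; ext r
    rw [hρ', Real.log_exp]
  -- integrability of φ∘fst, ψ∘snd wrt γ
  have hφγ : Integrable (fun r : E d × E d => φ r.1) γ := by
    have : Integrable φ (γ.map Prod.fst) := hfst ▸ hφi
    exact (integrable_map_measure hφm.aestronglyMeasurable measurable_fst.aemeasurable).mp this
  have hψγ : Integrable (fun r : E d × E d => ψ r.2) γ := by
    have : Integrable ψ (γ.map Prod.snd) := hsnd ▸ hψi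
    exact (integrable_map_measure hψm.aestronglyMeasurable measurable_snd.aemeasurable).mp this
  have hφeq : (∫ r : E d × E d, φ r.1 ∂γ) = ∫ x, φ x ∂μ := by
    rw [← hfst, integral_map measurable_fst.aemeasurable hφm.aestronglyMeasurable]
  have hψeq : (∫ r : E d × E d, ψ r.2 ∂γ) = ∫ y, ψ y ∂ν := by
    rw [← hsnd, integral_map measurable_snd.aemeasurable hψm.aestronglyMeasurable]
  have hmain : ε * ∫ r, g r ∂γ =
      (∫ x, φ x ∂μ) + (∫ y, ψ y ∂ν) - ∫ r : E d × E d, cost r.1 r.2 ∂γ := by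
    rw [← integral_const_mul]
    have : (fun r : E d × E d => ε * g r)
        = fun r => (φ r.1 + ψ r.2) - cost r.1 r.2 := by
      ext r; rw [hg]; field_simp
    have hadd : Integrable (fun r : E d × E d => φ r.1 + ψ r.2) γ := hφγ.add hψγ
    rw [this, integral_sub hadd hcost, integral_add hφγ hψγ, hφeq, hψeq]
  rw [hI, hmain, Dent, hS]
  ring
end
end

section
/- (Schrödinger pair is optimal, Theorem 2.1(3)⇒(1) and primal optimality.) Let (φ,ψ) be admissible, suppose ρ(x,y) := exp((φ(x)+ψ(y)−c(x,y))/ε) is the density of a coupling γ of μ and ν, and suppose c is γ-integrable. Then: (i) for every coupling γ' of μ and ν that is absolutely continuous with density ρ' such that ρ' log ρ' is Lebesgue-integrable and c is γ'-integrable, one has F_ε(γ) ≤ F_ε(γ'); and (ii) for every admissible pair (φ',ψ'), one has D_ε(φ',ψ') ≤ D_ε(φ,ψ). -/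
open MeasureTheory

noncomputable section

/-!
If `ρ = exp((φ ⊕ ψ - c)/ε)` is the density of a coupling `γ`, then for every coupling `γ'` with
density `ρ'` the cross term `ε ∫ ρ' log ρ` equals `∫ φ dμ + ∫ ψ dν - ∫ c dγ'`: it only sees the
marginals and the cost. Gibbs' inequality `∫ ρ' - ∫ ρ ≤ ∫ ρ' log ρ' - ∫ ρ' log ρ` (from
`log t ≤ t - 1`) then gives `F_ε(γ) = ∫ φ dμ + ∫ ψ dν ≤ F_ε(γ')`. Applied instead with `ρ` in the
first slot and the Gibbs density of another admissible pair `(φ', ψ')` in the second, the same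
two facts give `D_ε(φ', ψ') ≤ D_ε(φ, ψ)`.
-/

open MeasureTheory Real

section Density

variable {α : Type*} [MeasurableSpace α] {m : Measure α} {σ : α → ℝ}

theorem integral_withDensity_ofReal (hσ : Measurable σ) (hσ0 : ∀ a, 0 ≤ σ a) (h : α → ℝ) :
    ∫ a, h a ∂m.withDensity (fun a => ENNReal.ofReal (σ a)) = ∫ a, σ a * h a ∂m := by
  rw [integral_withDensity_eq_integral_toReal_smul hσ.ennreal_ofReal
    (ae_of_all _ fun _ => ENNReal.ofReal_lt_top)]
  simp only [ENNReal.toReal_ofReal (hσ0 _), smul_eq_mul]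

theorem integrable_withDensity_ofReal_iff (hσ : Measurable σ) (hσ0 : ∀ a, 0 ≤ σ a)
    {h : α → ℝ} :
    Integrable h (m.withDensity fun a => ENNReal.ofReal (σ a)) ↔
      Integrable (fun a => σ a * h a) m := by
  rw [integrable_withDensity_iff_integrable_smul' hσ.ennreal_ofReal
    (ae_of_all _ fun _ => ENNReal.ofReal_lt_top)]
  simp only [ENNReal.toReal_ofReal (hσ0 _), smul_eq_mul]

theorem integrable_of_isProbabilityMeasure_withDensity_ofReal (hσ : Measurable σ)
    (hσ0 : ∀ a, 0 ≤ σ a) [IsProbabilityMeasure (m.withDensity fun a => ENNReal.ofReal (σ a))] :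
    Integrable σ m := by
  simpa using (integrable_withDensity_ofReal_iff hσ hσ0 (h := fun _ => (1 : ℝ))).mp
    (integrable_const 1)

theorem integral_eq_one_of_isProbabilityMeasure_withDensity_ofReal (hσ : Measurable σ)
    (hσ0 : ∀ a, 0 ≤ σ a) [IsProbabilityMeasure (m.withDensity fun a => ENNReal.ofReal (σ a))] :
    ∫ a, σ a ∂m = 1 := by
  simpa using (integral_withDensity_ofReal hσ hσ0 (fun _ => (1 : ℝ)) (m := m)).symm

theorem Real.sub_le_mul_log_sub_mul_log {a b : ℝ} (ha : 0 ≤ a) (hb : 0 < b) :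
    a - b ≤ a * log a - a * log b := by
  rcases ha.eq_or_lt with rfl | ha
  · simpa using hb.le
  · have h := mul_le_mul_of_nonneg_left (log_le_sub_one_of_pos (div_pos hb ha)) ha.le
    rw [log_div hb.ne' ha.ne', mul_sub_one, mul_div_cancel₀ _ ha.ne'] at h
    linarith

theorem integral_sub_integral_le_integral_mul_log_sub_integral_mul_log {p q : α → ℝ}
    (hp0 : ∀ a, 0 ≤ p a) (hq0 : ∀ a, 0 < q a) (hp : Integrable p m) (hq : Integrable q m)
    (hplogp : Integrable (fun a => p a * log (p a)) m)
    (hplogq : Integrable (fun a => p a * log (q a)) m) :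
    ∫ a, p a ∂m - ∫ a, q a ∂m ≤
      ∫ a, p a * log (p a) ∂m - ∫ a, p a * log (q a) ∂m := by
  rw [← integral_sub hp hq, ← integral_sub hplogp hplogq]
  exact integral_mono (hp.sub hq) (hplogp.sub hplogq) fun a =>
    Real.sub_le_mul_log_sub_mul_log (hp0 a) (hq0 a)

end Density

section Coupling

variable {X Y : Type*} [MeasurableSpace X] [MeasurableSpace Y] {γ : Measure (X × Y)}
  {μ : Measure X} {ν : Measure Y} {φ : X → ℝ} {ψ : Y → ℝ} {c : X × Y → ℝ}

theorem integrable_add_sub_of_map_eq (h1 : γ.map Prod.fst = μ) (h2 : γ.map Prod.snd = ν)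
    (hφ : Integrable φ μ) (hψ : Integrable ψ ν) (hc : Integrable c γ) :
    Integrable (fun r => φ r.1 + ψ r.2 - c r) γ := by
  subst h1 h2
  exact ((hφ.comp_measurable measurable_fst).add (hψ.comp_measurable measurable_snd)).sub hc

theorem integral_add_sub_of_map_eq (h1 : γ.map Prod.fst = μ) (h2 : γ.map Prod.snd = ν)
    (hφ : Integrable φ μ) (hψ : Integrable ψ ν) (hc : Integrable c γ) :
    ∫ r, (φ r.1 + ψ r.2 - c r) ∂γ = ∫ x, φ x ∂μ + ∫ y, ψ y ∂ν - ∫ r, c r ∂γ := by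
  subst h1 h2
  have hφ' : Integrable (fun r => φ r.1) γ := hφ.comp_measurable measurable_fst
  have hψ' : Integrable (fun r => ψ r.2) γ := hψ.comp_measurable measurable_snd
  rw [integral_sub (f := fun r => φ r.1 + ψ r.2) (hφ'.add hψ') hc, integral_add hφ' hψ',
    integral_map measurable_fst.aemeasurable hφ.aestronglyMeasurable,
    integral_map measurable_snd.aemeasurable hψ.aestronglyMeasurable]

end Coupling

section LogDensity

variable {X Y : Type*} [MeasurableSpace X] [MeasurableSpace Y] {m : Measure (X × Y)}
  {σ q : X × Y → ℝ} {μ : Measure X} {ν : Measure Y} {φ : X → ℝ} {ψ : Y → ℝ}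
  {c : X × Y → ℝ} {ε : ℝ}

theorem mul_integral_mul_log_eq_of_map_withDensity (hσ : Measurable σ) (hσ0 : ∀ r, 0 ≤ σ r)
    (h1 : (m.withDensity fun r => ENNReal.ofReal (σ r)).map Prod.fst = μ)
    (h2 : (m.withDensity fun r => ENNReal.ofReal (σ r)).map Prod.snd = ν)
    (hφ : Integrable φ μ) (hψ : Integrable ψ ν)
    (hc : Integrable c (m.withDensity fun r => ENNReal.ofReal (σ r)))
    (hq : ∀ r, ε * log (q r) = φ r.1 + ψ r.2 - c r) :
    ε * ∫ r, σ r * log (q r) ∂m =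
      ∫ x, φ x ∂μ + ∫ y, ψ y ∂ν - ∫ r, c r ∂(m.withDensity fun r => ENNReal.ofReal (σ r)) := by
  rw [← integral_add_sub_of_map_eq h1 h2 hφ hψ hc, integral_withDensity_ofReal hσ hσ0,
    ← integral_const_mul]
  congr 1 with r
  rw [← hq]
  ring

theorem integrable_mul_log_of_map_withDensity (hε : ε ≠ 0) (hσ : Measurable σ)
    (hσ0 : ∀ r, 0 ≤ σ r)
    (h1 : (m.withDensity fun r => ENNReal.ofReal (σ r)).map Prod.fst = μ)
    (h2 : (m.withDensity fun r => ENNReal.ofReal (σ r)).map Prod.snd = ν)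
    (hφ : Integrable φ μ) (hψ : Integrable ψ ν)
    (hc : Integrable c (m.withDensity fun r => ENNReal.ofReal (σ r)))
    (hq : ∀ r, ε * log (q r) = φ r.1 + ψ r.2 - c r) :
    Integrable (fun r => σ r * log (q r)) m := by
  have h := (integrable_withDensity_ofReal_iff hσ hσ0).mp
    (integrable_add_sub_of_map_eq h1 h2 hφ hψ hc)
  refine (h.const_mul ε⁻¹).congr (ae_of_all _ fun r => ?_)
  simp only [← hq]
  field_simp

end LogDensity

section Schroedinger

variable {d : ℕ} {ε : ℝ} {μ ν : Measure (E d)} {φ ψ : E d → ℝ}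

def gibbsDensity (ε : ℝ) (φ ψ : E d → ℝ) (r : E d × E d) : ℝ :=
  exp ((φ r.1 + ψ r.2 - cost r.1 r.2) / ε)

theorem gibbsDensity_pos (r : E d × E d) : 0 < gibbsDensity ε φ ψ r := exp_pos _

theorem mul_log_gibbsDensity (hε : ε ≠ 0) (r : E d × E d) :
    ε * log (gibbsDensity ε φ ψ r) = φ r.1 + ψ r.2 - cost r.1 r.2 := by
  rw [gibbsDensity, log_exp]
  field_simp

theorem measurable_gibbsDensity (hφ : Measurable φ) (hψ : Measurable ψ) :
    Measurable (gibbsDensity ε φ ψ) := by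
  unfold gibbsDensity cost
  fun_prop

theorem Fent_withDensity_gibbsDensity_le (hε : 0 < ε) (hadm : Admissible ε μ ν φ ψ)
    (hγ : IsCoupling μ ν (volume.withDensity fun r => ENNReal.ofReal (gibbsDensity ε φ ψ r)))
    (hcost : Integrable (fun r : E d × E d => cost r.1 r.2)
      (volume.withDensity fun r => ENNReal.ofReal (gibbsDensity ε φ ψ r)))
    {ρ' : E d × E d → ℝ} (hρ' : Measurable ρ') (hρ'0 : ∀ r, 0 ≤ ρ' r)
    (hγ' : IsCoupling μ ν (volume.withDensity fun r => ENNReal.ofReal (ρ' r)))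
    (hent : Integrable (fun r => ρ' r * log (ρ' r)) volume)
    (hcost' : Integrable (fun r : E d × E d => cost r.1 r.2)
      (volume.withDensity fun r => ENNReal.ofReal (ρ' r))) :
    Fent ε (volume.withDensity fun r => ENNReal.ofReal (gibbsDensity ε φ ψ r))
        (gibbsDensity ε φ ψ) ≤
      Fent ε (volume.withDensity fun r => ENNReal.ofReal (ρ' r)) ρ' := by
  obtain ⟨hφm, hψm, hφ, hψ, hρi⟩ := hadm
  obtain ⟨hγp, hγ1, hγ2⟩ := hγ
  obtain ⟨hγ'p, hγ'1, hγ'2⟩ := hγ'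
  have hρ := measurable_gibbsDensity (ε := ε) hφm hψm
  have hρ0 r := (gibbsDensity_pos (ε := ε) (φ := φ) (ψ := ψ) r).le
  have hlog := mul_log_gibbsDensity (φ := φ) (ψ := ψ) hε.ne'
  have hself := mul_integral_mul_log_eq_of_map_withDensity hρ hρ0 hγ1 hγ2 hφ hψ hcost hlog
  have hcross := mul_integral_mul_log_eq_of_map_withDensity hρ' hρ'0 hγ'1 hγ'2 hφ hψ hcost' hlog
  have hgibbs := integral_sub_integral_le_integral_mul_log_sub_integral_mul_log hρ'0
    gibbsDensity_pos (integrable_of_isProbabilityMeasure_withDensity_ofReal hρ' hρ'0) hρi hent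
    (integrable_mul_log_of_map_withDensity hε.ne' hρ' hρ'0 hγ'1 hγ'2 hφ hψ hcost' hlog)
  rw [integral_eq_one_of_isProbabilityMeasure_withDensity_ofReal hρ' hρ'0,
    integral_eq_one_of_isProbabilityMeasure_withDensity_ofReal hρ hρ0] at hgibbs
  have hscaled := mul_le_mul_of_nonneg_left hgibbs hε.le
  rw [mul_sub, mul_sub] at hscaled
  unfold Fent
  linarith

theorem Dent_le_Dent_of_isCoupling_withDensity_gibbsDensity (hε : 0 < ε)
    (hadm : Admissible ε μ ν φ ψ)
    (hγ : IsCoupling μ ν (volume.withDensity fun r => ENNReal.ofReal (gibbsDensity ε φ ψ r)))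
    (hcost : Integrable (fun r : E d × E d => cost r.1 r.2)
      (volume.withDensity fun r => ENNReal.ofReal (gibbsDensity ε φ ψ r)))
    {φ' ψ' : E d → ℝ} (hadm' : Admissible ε μ ν φ' ψ') :
    Dent ε μ ν φ' ψ' ≤ Dent ε μ ν φ ψ := by
  obtain ⟨hφm, hψm, hφ, hψ, hρi⟩ := hadm
  obtain ⟨-, -, hφ', hψ', hρ'i⟩ := hadm'
  obtain ⟨-, hγ1, hγ2⟩ := hγ
  have hρ := measurable_gibbsDensity (ε := ε) hφm hψm
  have hρ0 r := (gibbsDensity_pos (ε := ε) (φ := φ) (ψ := ψ) r).le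
  have hlog := mul_log_gibbsDensity (φ := φ) (ψ := ψ) hε.ne'
  have hlog' := mul_log_gibbsDensity (φ := φ') (ψ := ψ') hε.ne'
  have hself := mul_integral_mul_log_eq_of_map_withDensity hρ hρ0 hγ1 hγ2 hφ hψ hcost hlog
  have hcross := mul_integral_mul_log_eq_of_map_withDensity hρ hρ0 hγ1 hγ2 hφ' hψ' hcost hlog'
  have hgibbs := integral_sub_integral_le_integral_mul_log_sub_integral_mul_log hρ0
    gibbsDensity_pos hρi hρ'i
    (integrable_mul_log_of_map_withDensity hε.ne' hρ hρ0 hγ1 hγ2 hφ hψ hcost hlog)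
    (integrable_mul_log_of_map_withDensity hε.ne' hρ hρ0 hγ1 hγ2 hφ' hψ' hcost hlog')
  change ∫ x, φ' x ∂μ + ∫ y, ψ' y ∂ν - ε * ∫ r, gibbsDensity ε φ' ψ' r ≤
    ∫ x, φ x ∂μ + ∫ y, ψ y ∂ν - ε * ∫ r, gibbsDensity ε φ ψ r
  have hscaled := mul_le_mul_of_nonneg_left hgibbs hε.le
  rw [mul_sub, mul_sub] at hscaled
  linarith

end Schroedinger

theorem schroedinger_pair_optimal_general {d : ℕ} {ε : ℝ} (hε : 0 < ε)
    (μ ν : Measure (E d))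
    (φ ψ : E d → ℝ) (hadm : Admissible ε μ ν φ ψ)
    (ρ : E d × E d → ℝ)
    (hρ : ρ = fun r => Real.exp ((φ r.1 + ψ r.2 - cost r.1 r.2) / ε))
    (γ : Measure (E d × E d))
    (hγdef : γ = volume.withDensity fun r => ENNReal.ofReal (ρ r))
    (hγ : IsCoupling μ ν γ)
    (hcost : Integrable (fun r : E d × E d => cost r.1 r.2) γ) :
    (∀ γ' : Measure (E d × E d), ∀ ρ' : E d × E d → ℝ,
      IsCoupling μ ν γ' → Measurable ρ' → (∀ r, 0 ≤ ρ' r) →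
      γ' = (volume.withDensity fun r => ENNReal.ofReal (ρ' r)) →
      Integrable (fun r => ρ' r * Real.log (ρ' r)) volume →
      Integrable (fun r : E d × E d => cost r.1 r.2) γ' →
      Fent ε γ ρ ≤ Fent ε γ' ρ') ∧
    (∀ φ' ψ' : E d → ℝ, Admissible ε μ ν φ' ψ' →
      Dent ε μ ν φ' ψ' ≤ Dent ε μ ν φ ψ) := by
  subst hρ hγdef
  refine ⟨fun γ' ρ' hγ' hρ' hρ'0 hγ'def hent hcost' => ?_,
    fun φ' ψ' hadm' => Dent_le_Dent_of_isCoupling_withDensity_gibbsDensity hε hadm hγ hcost hadm'⟩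
  subst hγ'def
  exact Fent_withDensity_gibbsDensity_le hε hadm hγ hcost hρ' hρ'0 hγ' hent hcost'

theorem schroedinger_pair_optimal {d : ℕ} (hd : 1 ≤ d) {ε : ℝ} (hε : 0 < ε)
    (μ ν : Measure (E d)) [IsProbabilityMeasure μ] [IsProbabilityMeasure ν]
    (φ ψ : E d → ℝ) (hadm : Admissible ε μ ν φ ψ)
    (ρ : E d × E d → ℝ)
    (hρ : ρ = fun r => Real.exp ((φ r.1 + ψ r.2 - cost r.1 r.2) / ε))
    (γ : Measure (E d × E d))
    (hγdef : γ = volume.withDensity fun r => ENNReal.ofReal (ρ r))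
    (hγ : IsCoupling μ ν γ)
    (hcost : Integrable (fun r : E d × E d => cost r.1 r.2) γ) :
    (∀ γ' : Measure (E d × E d), ∀ ρ' : E d × E d → ℝ,
      IsCoupling μ ν γ' → Measurable ρ' → (∀ r, 0 ≤ ρ' r) →
      γ' = (volume.withDensity fun r => ENNReal.ofReal (ρ' r)) →
      Integrable (fun r => ρ' r * Real.log (ρ' r)) volume →
      Integrable (fun r : E d × E d => cost r.1 r.2) γ' →
      Fent ε γ ρ ≤ Fent ε γ' ρ') ∧
    (∀ φ' ψ' : E d → ℝ, Admissible ε μ ν φ' ψ' →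
      Dent ε μ ν φ' ψ' ≤ Dent ε μ ν φ ψ) :=
  schroedinger_pair_optimal_general hε μ ν φ ψ hadm ρ hρ γ hγdef hγ hcost
end
end

section
/- (Uniqueness of the entropic primal minimizer.) Let γ₁ and γ₂ be couplings of μ and ν, absolutely continuous with respect to Lebesgue measure on E × E with densities ρ₁ and ρ₂ such that c is γᵢ-integrable and ρᵢ log ρᵢ is Lebesgue-integrable (i = 1, 2). If F_ε(γ₁) = F_ε(γ₂) and both attain the infimum of F_ε over all couplings of μ and ν that are absolutely continuous with density ρ such that c is integrable and ρ log ρ is Lebesgue-integrable, then γ₁ = γ₂. -/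
/-!
The cost term of `Fent` is linear in the coupling and `x ↦ x log x` is strictly convex, so the
mixture `(γ₁ + γ₂) / 2`, an admissible coupling with density `(ρ₁ + ρ₂) / 2`, satisfies
`Fent (mixture) ≤ (Fent γ₁ + Fent γ₂) / 2 = Fent γ₁ ≤ Fent (mixture)`. Hence the Jensen gap of
`x log x` at `ρ₁, ρ₂` integrates to zero, which forces `ρ₁ = ρ₂` almost everywhere.
-/

open MeasureTheory

noncomputable section

open scoped ENNReal

namespace Real

lemma mul_log_add_mul_log_le {s t : ℝ} (hs : 0 ≤ s) (ht : 0 ≤ t) :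
    s * log s + t * log t ≤ (s + t) * log (s + t) := by
  rcases hs.eq_or_lt with rfl | hs'
  · simp
  rcases ht.eq_or_lt with rfl | ht'
  · simp
  have hs_le : s * log s ≤ s * log (s + t) :=
    mul_le_mul_of_nonneg_left (log_le_log hs' (by linarith)) hs
  have ht_le : t * log t ≤ t * log (s + t) :=
    mul_le_mul_of_nonneg_left (log_le_log ht' (by linarith)) ht
  linarith

/-- On a measure of infinite mass, such as Lebesgue measure, `x log x ≥ x - 1` is useless as a lower
bound; this one is integrable whenever `a`, `b` and their entropies are. -/
lemma sub_le_midpoint_mul_log {a b : ℝ} (ha : 0 ≤ a) (hb : 0 ≤ b) :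
    (a * log a + b * log b) / 2 - (a + b) / 2 * log 2 ≤ (a + b) / 2 * log ((a + b) / 2) := by
  rcases (add_nonneg ha hb).eq_or_lt with hab | hab
  · obtain ⟨rfl, rfl⟩ : a = 0 ∧ b = 0 := ⟨by linarith, by linarith⟩
    simp
  rw [log_div hab.ne' two_ne_zero]
  linarith [mul_log_add_mul_log_le ha hb]

end Real

section Convex

variable {s : Set ℝ} {φ : ℝ → ℝ} {a b : ℝ}

lemma ConvexOn.map_midpoint_le (hφ : ConvexOn ℝ s φ) (ha : a ∈ s) (hb : b ∈ s) :
    φ ((a + b) / 2) ≤ (φ a + φ b) / 2 := by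
  have := hφ.2 ha hb (by norm_num : (0 : ℝ) ≤ 1 / 2) (by norm_num : (0 : ℝ) ≤ 1 / 2) (by norm_num)
  rw [show (1 / 2 : ℝ) • a + (1 / 2 : ℝ) • b = (a + b) / 2 by simp only [smul_eq_mul]; ring,
    smul_eq_mul, smul_eq_mul] at this
  linarith

lemma StrictConvexOn.map_midpoint_lt (hφ : StrictConvexOn ℝ s φ) (ha : a ∈ s) (hb : b ∈ s)
    (hab : a ≠ b) : φ ((a + b) / 2) < (φ a + φ b) / 2 := by
  have := hφ.2 ha hb hab (by norm_num : (0 : ℝ) < 1 / 2) (by norm_num : (0 : ℝ) < 1 / 2)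
    (by norm_num)
  rw [show (1 / 2 : ℝ) • a + (1 / 2 : ℝ) • b = (a + b) / 2 by simp only [smul_eq_mul]; ring,
    smul_eq_mul, smul_eq_mul] at this
  linarith

end Convex

section Midpoint

variable {α : Type*} [MeasurableSpace α] {μ : Measure α}

lemma integrable_of_isFiniteMeasure_withDensity_ofReal {ρ : α → ℝ}
    (hρ : AEStronglyMeasurable ρ μ) (hρ0 : 0 ≤ᵐ[μ] ρ)
    (hfin : IsFiniteMeasure (μ.withDensity fun x => ENNReal.ofReal (ρ x))) :
    Integrable ρ μ := by
  refine ⟨hρ, (hasFiniteIntegral_iff_ofReal hρ0).2 ?_⟩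
  simpa [withDensity_apply] using measure_lt_top (μ.withDensity fun x => ENNReal.ofReal (ρ x))
    Set.univ

lemma withDensity_ofReal_midpoint {f g : α → ℝ} (hf : Measurable f) (hg : Measurable g)
    (hf0 : ∀ x, 0 ≤ f x) (hg0 : ∀ x, 0 ≤ g x) :
    μ.withDensity (fun x => ENNReal.ofReal ((f x + g x) / 2)) =
      (2⁻¹ : ℝ≥0∞) • μ.withDensity (fun x => ENNReal.ofReal (f x)) +
        (2⁻¹ : ℝ≥0∞) • μ.withDensity (fun x => ENNReal.ofReal (g x)) := by
  have hdens : (fun x => ENNReal.ofReal ((f x + g x) / 2)) =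
      (2⁻¹ : ℝ≥0∞) • (fun x => ENNReal.ofReal (f x)) +
        (2⁻¹ : ℝ≥0∞) • (fun x => ENNReal.ofReal (g x)) := by
    funext x
    rw [ENNReal.ofReal_div_of_pos two_pos, ENNReal.ofReal_add (hf0 x) (hg0 x)]
    simp only [Pi.add_apply, Pi.smul_apply, smul_eq_mul, ENNReal.ofReal_ofNat]
    rw [ENNReal.div_eq_inv_mul, mul_add]
  rw [hdens, withDensity_add_left (hf.ennreal_ofReal.const_smul _),
    withDensity_smul _ hf.ennreal_ofReal, withDensity_smul _ hg.ennreal_ofReal]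

lemma integral_inv_two_smul_add_inv_two_smul {ν₁ ν₂ : Measure α} {f : α → ℝ}
    (hf₁ : Integrable f ν₁) (hf₂ : Integrable f ν₂) :
    ∫ x, f x ∂((2⁻¹ : ℝ≥0∞) • ν₁ + (2⁻¹ : ℝ≥0∞) • ν₂) = ((∫ x, f x ∂ν₁) + ∫ x, f x ∂ν₂) / 2 := by
  rw [integral_add_measure (hf₁.smul_measure (by simp)) (hf₂.smul_measure (by simp)),
    integral_smul_measure, integral_smul_measure]
  simp only [ENNReal.toReal_inv, ENNReal.toReal_ofNat, smul_eq_mul]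
  ring

lemma integrable_midpoint_mul_log {f g : α → ℝ} (hf0 : 0 ≤ᵐ[μ] f) (hg0 : 0 ≤ᵐ[μ] g)
    (hf : Integrable f μ) (hg : Integrable g μ)
    (hfl : Integrable (fun x => f x * Real.log (f x)) μ)
    (hgl : Integrable (fun x => g x * Real.log (g x)) μ) :
    Integrable (fun x => (f x + g x) / 2 * Real.log ((f x + g x) / 2)) μ := by
  refine integrable_of_le_of_le
    (Real.continuous_mul_log.comp_aestronglyMeasurable ((hf.add hg).div_const 2).1)
    (g₁ := fun x => (f x * Real.log (f x) + g x * Real.log (g x)) / 2 -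
      (f x + g x) / 2 * Real.log 2)
    (g₂ := fun x => (f x * Real.log (f x) + g x * Real.log (g x)) / 2) ?_ ?_
    (((hfl.add hgl).div_const 2).sub (((hf.add hg).div_const 2).mul_const _))
    ((hfl.add hgl).div_const 2)
  · filter_upwards [hf0, hg0] with x hfx hgx
    exact Real.sub_le_midpoint_mul_log hfx hgx
  · filter_upwards [hf0, hg0] with x hfx hgx
    exact Real.convexOn_mul_log.map_midpoint_le hfx hgx

lemma StrictConvexOn.ae_eq_of_integral_map_midpoint_ge {s : Set ℝ} {φ : ℝ → ℝ}
    (hφ : StrictConvexOn ℝ s φ) {f g : α → ℝ} (hfs : ∀ᵐ x ∂μ, f x ∈ s) (hgs : ∀ᵐ x ∂μ, g x ∈ s)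
    (hφf : Integrable (fun x => φ (f x)) μ) (hφg : Integrable (fun x => φ (g x)) μ)
    (hφm : Integrable (fun x => φ ((f x + g x) / 2)) μ)
    (hge : ((∫ x, φ (f x) ∂μ) + ∫ x, φ (g x) ∂μ) / 2 ≤ ∫ x, φ ((f x + g x) / 2) ∂μ) :
    f =ᵐ[μ] g := by
  set gap := fun x => (φ (f x) + φ (g x)) / 2 - φ ((f x + g x) / 2)
  have hgap_nonneg : 0 ≤ᵐ[μ] gap := by
    filter_upwards [hfs, hgs] with x hfx hgx
    exact sub_nonneg.2 (hφ.convexOn.map_midpoint_le hfx hgx)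
  have hgap_int : Integrable gap μ := ((hφf.add hφg).div_const 2).sub hφm
  have hgap_zero : ∫ x, gap x ∂μ = 0 := by
    refine le_antisymm ?_ (integral_nonneg_of_ae hgap_nonneg)
    have hint : Integrable (fun x => (φ (f x) + φ (g x)) / 2) μ := (hφf.add hφg).div_const 2
    rw [integral_sub hint hφm, integral_div, integral_add hφf hφg]
    linarith
  filter_upwards [(integral_eq_zero_iff_of_nonneg_ae hgap_nonneg hgap_int).1 hgap_zero, hfs, hgs]
    with x hx hfx hgx
  by_contra hne
  have hlt := hφ.map_midpoint_lt hfx hgx hne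
  simp only [gap, Pi.zero_apply] at hx
  linarith

end Midpoint

lemma IsCoupling.smul_add_smul {d : ℕ} {μ ν : Measure (E d)} {γ₁ γ₂ : Measure (E d × E d)}
    (h₁ : IsCoupling μ ν γ₁) (h₂ : IsCoupling μ ν γ₂) {a b : ℝ≥0∞} (hab : a + b = 1) :
    IsCoupling μ ν (a • γ₁ + b • γ₂) := by
  obtain ⟨hp₁, hfst₁, hsnd₁⟩ := h₁
  obtain ⟨hp₂, hfst₂, hsnd₂⟩ := h₂
  refine ⟨⟨by simp [hab]⟩, ?_, ?_⟩
  · rw [Measure.map_add _ _ measurable_fst, Measure.map_smul, Measure.map_smul, hfst₁, hfst₂,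
      ← add_smul, hab, one_smul]
  · rw [Measure.map_add _ _ measurable_snd, Measure.map_smul, Measure.map_smul, hsnd₁, hsnd₂,
      ← add_smul, hab, one_smul]

theorem entropic_primal_minimizer_unique_general {d : ℕ} {ε : ℝ} (hε : 0 < ε)
    (μ ν : Measure (E d))
    (γ₁ γ₂ : Measure (E d × E d)) (hγ₁ : IsCoupling μ ν γ₁) (hγ₂ : IsCoupling μ ν γ₂)
    (ρ₁ ρ₂ : E d × E d → ℝ)
    (hρ₁m : Measurable ρ₁) (hρ₂m : Measurable ρ₂)
    (hρ₁0 : ∀ r, 0 ≤ ρ₁ r) (hρ₂0 : ∀ r, 0 ≤ ρ₂ r)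
    (hγ₁ρ : γ₁ = volume.withDensity fun r => ENNReal.ofReal (ρ₁ r))
    (hγ₂ρ : γ₂ = volume.withDensity fun r => ENNReal.ofReal (ρ₂ r))
    (hc₁ : Integrable (fun r : E d × E d => cost r.1 r.2) γ₁)
    (hc₂ : Integrable (fun r : E d × E d => cost r.1 r.2) γ₂)
    (he₁ : Integrable (fun r => ρ₁ r * Real.log (ρ₁ r)) volume)
    (he₂ : Integrable (fun r => ρ₂ r * Real.log (ρ₂ r)) volume)
    (heq : Fent ε γ₁ ρ₁ = Fent ε γ₂ ρ₂)
    (hmin₁ : ∀ γ : Measure (E d × E d), ∀ ρ : E d × E d → ℝ,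
      IsCoupling μ ν γ → Measurable ρ → (∀ r, 0 ≤ ρ r) →
      γ = (volume.withDensity fun r => ENNReal.ofReal (ρ r)) →
      Integrable (fun r : E d × E d => cost r.1 r.2) γ →
      Integrable (fun r => ρ r * Real.log (ρ r)) volume →
      Fent ε γ₁ ρ₁ ≤ Fent ε γ ρ) :
    γ₁ = γ₂ := by
  have hint₁ : Integrable ρ₁ volume := integrable_of_isFiniteMeasure_withDensity_ofReal
    hρ₁m.aestronglyMeasurable (ae_of_all _ hρ₁0)
    (by have := hγ₁.1; rw [hγ₁ρ] at this; infer_instance)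
  have hint₂ : Integrable ρ₂ volume := integrable_of_isFiniteMeasure_withDensity_ofReal
    hρ₂m.aestronglyMeasurable (ae_of_all _ hρ₂0)
    (by have := hγ₂.1; rw [hγ₂ρ] at this; infer_instance)
  have hmix : (2⁻¹ : ℝ≥0∞) • γ₁ + (2⁻¹ : ℝ≥0∞) • γ₂ =
      volume.withDensity fun r => ENNReal.ofReal ((ρ₁ r + ρ₂ r) / 2) := by
    rw [hγ₁ρ, hγ₂ρ, withDensity_ofReal_midpoint hρ₁m hρ₂m hρ₁0 hρ₂0]
  have hent := integrable_midpoint_mul_log (ae_of_all _ hρ₁0) (ae_of_all _ hρ₂0) hint₁ hint₂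
    he₁ he₂
  have hle := hmin₁ _ (fun r => (ρ₁ r + ρ₂ r) / 2)
    (hγ₁.smul_add_smul hγ₂ ENNReal.inv_two_add_inv_two) (by fun_prop)
    (fun r => div_nonneg (add_nonneg (hρ₁0 r) (hρ₂0 r)) zero_le_two) hmix
    ((hc₁.smul_measure (by simp)).add_measure (hc₂.smul_measure (by simp))) hent
  rw [Fent, Fent, integral_inv_two_smul_add_inv_two_smul hc₁ hc₂] at hle
  unfold Fent at heq
  have hae : ρ₁ =ᵐ[volume] ρ₂ := Real.strictConvexOn_mul_log.ae_eq_of_integral_map_midpoint_ge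
    (ae_of_all _ hρ₁0) (ae_of_all _ hρ₂0) he₁ he₂ hent (le_of_mul_le_mul_left (by linarith) hε)
  rw [hγ₁ρ, hγ₂ρ]
  exact withDensity_congr_ae (hae.mono fun r hr => congrArg ENNReal.ofReal hr)

theorem entropic_primal_minimizer_unique {d : ℕ} (hd : 1 ≤ d) {ε : ℝ} (hε : 0 < ε)
    (μ ν : Measure (E d)) [IsProbabilityMeasure μ] [IsProbabilityMeasure ν]
    (γ₁ γ₂ : Measure (E d × E d)) (hγ₁ : IsCoupling μ ν γ₁) (hγ₂ : IsCoupling μ ν γ₂)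
    (ρ₁ ρ₂ : E d × E d → ℝ)
    (hρ₁m : Measurable ρ₁) (hρ₂m : Measurable ρ₂)
    (hρ₁0 : ∀ r, 0 ≤ ρ₁ r) (hρ₂0 : ∀ r, 0 ≤ ρ₂ r)
    (hγ₁ρ : γ₁ = volume.withDensity fun r => ENNReal.ofReal (ρ₁ r))
    (hγ₂ρ : γ₂ = volume.withDensity fun r => ENNReal.ofReal (ρ₂ r))
    (hc₁ : Integrable (fun r : E d × E d => cost r.1 r.2) γ₁)
    (hc₂ : Integrable (fun r : E d × E d => cost r.1 r.2) γ₂)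
    (he₁ : Integrable (fun r => ρ₁ r * Real.log (ρ₁ r)) volume)
    (he₂ : Integrable (fun r => ρ₂ r * Real.log (ρ₂ r)) volume)
    (heq : Fent ε γ₁ ρ₁ = Fent ε γ₂ ρ₂)
    (hmin₁ : ∀ γ : Measure (E d × E d), ∀ ρ : E d × E d → ℝ,
      IsCoupling μ ν γ → Measurable ρ → (∀ r, 0 ≤ ρ r) →
      γ = (volume.withDensity fun r => ENNReal.ofReal (ρ r)) →
      Integrable (fun r : E d × E d => cost r.1 r.2) γ →
      Integrable (fun r => ρ r * Real.log (ρ r)) volume →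
      Fent ε γ₁ ρ₁ ≤ Fent ε γ ρ)
    (hmin₂ : ∀ γ : Measure (E d × E d), ∀ ρ : E d × E d → ℝ,
      IsCoupling μ ν γ → Measurable ρ → (∀ r, 0 ≤ ρ r) →
      γ = (volume.withDensity fun r => ENNReal.ofReal (ρ r)) →
      Integrable (fun r : E d × E d => cost r.1 r.2) γ →
      Integrable (fun r => ρ r * Real.log (ρ r)) volume →
      Fent ε γ₂ ρ₂ ≤ Fent ε γ ρ) :
    γ₁ = γ₂ :=
  entropic_primal_minimizer_unique_general hε μ ν γ₁ γ₂ hγ₁ hγ₂ ρ₁ ρ₂ hρ₁m hρ₂m hρ₁0 hρ₂0 hγ₁ρ hγ₂ρ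
    hc₁ hc₂ he₁ he₂ heq hmin₁
end
end

section
/- (Strict concavity of the dual functional in each variable.) Let (φ,ψ₀) and (φ,ψ₁) be admissible pairs. If the set {y ∈ E : ψ₀(y) ≠ ψ₁(y)} has positive Lebesgue measure, then D_ε(φ, (ψ₀+ψ₁)/2) > (1/2)·D_ε(φ,ψ₀) + (1/2)·D_ε(φ,ψ₁). -/
open MeasureTheory

noncomputable section

lemma exp_half_mul (a : ℝ) : Real.exp a = Real.exp (a / 2) * Real.exp (a / 2) := by
  rw [← Real.exp_add]; congr 1; ring

lemma exp_avg (a b : ℝ) :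
    Real.exp ((a + b) / 2) = Real.exp (a / 2) * Real.exp (b / 2) := by
  rw [← Real.exp_add]; congr 1; ring

lemma exp_avg_le (a b : ℝ) :
    Real.exp ((a + b) / 2) ≤ (Real.exp a + Real.exp b) / 2 := by
  rw [exp_avg, exp_half_mul a, exp_half_mul b]
  nlinarith [sq_nonneg (Real.exp (a / 2) - Real.exp (b / 2))]

lemma exp_avg_lt {a b : ℝ} (h : a ≠ b) :
    Real.exp ((a + b) / 2) < (Real.exp a + Real.exp b) / 2 := by
  have hpq : Real.exp (a / 2) ≠ Real.exp (b / 2) := by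
    rw [Ne, Real.exp_eq_exp]
    intro h2; exact h (by linarith)
  rw [exp_avg, exp_half_mul a, exp_half_mul b]
  nlinarith [sq_pos_of_ne_zero (sub_ne_zero.mpr hpq)]

lemma mid_div (u v₀ v₁ c ε : ℝ) :
    (u + (v₀ + v₁) / 2 - c) / ε
      = ((u + v₀ - c) / ε + (u + v₁ - c) / ε) / 2 := by
  ring

theorem dual_functional_strictly_concave {d : ℕ} (hd : 1 ≤ d) {ε : ℝ} (hε : 0 < ε)
    (μ ν : Measure (E d)) [IsProbabilityMeasure μ] [IsProbabilityMeasure ν]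
    (φ ψ₀ ψ₁ : E d → ℝ)
    (hadm₀ : Admissible ε μ ν φ ψ₀) (hadm₁ : Admissible ε μ ν φ ψ₁)
    (hne : 0 < (volume : Measure (E d)) {y : E d | ψ₀ y ≠ ψ₁ y}) :
    Dent ε μ ν φ (fun y => (ψ₀ y + ψ₁ y) / 2) >
      (1 / 2) * Dent ε μ ν φ ψ₀ + (1 / 2) * Dent ε μ ν φ ψ₁ := by
  obtain ⟨hφm, hψ₀m, hφi, hψ₀i, hf₀i⟩ := hadm₀
  obtain ⟨-, hψ₁m, -, hψ₁i, hf₁i⟩ := hadm₁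
  have hεne : ε ≠ 0 := hε.ne'
  -- abbreviations as plain definitions (no `set`)
  have key : ∀ r : E d × E d,
      Real.exp ((φ r.1 + (ψ₀ r.2 + ψ₁ r.2) / 2 - cost r.1 r.2) / ε) ≤
        (Real.exp ((φ r.1 + ψ₀ r.2 - cost r.1 r.2) / ε)
          + Real.exp ((φ r.1 + ψ₁ r.2 - cost r.1 r.2) / ε)) / 2 := by
    intro r
    rw [mid_div]
    exact exp_avg_le _ _
  have keyStrict : ∀ r : E d × E d, ψ₀ r.2 ≠ ψ₁ r.2 →
      Real.exp ((φ r.1 + (ψ₀ r.2 + ψ₁ r.2) / 2 - cost r.1 r.2) / ε) <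
        (Real.exp ((φ r.1 + ψ₀ r.2 - cost r.1 r.2) / ε)
          + Real.exp ((φ r.1 + ψ₁ r.2 - cost r.1 r.2) / ε)) / 2 := by
    intro r hr
    rw [mid_div]
    refine exp_avg_lt ?_
    intro h
    apply hr
    rw [div_eq_div_iff hεne hεne] at h
    have := mul_right_cancel₀ hεne h
    linarith
  -- measurability
  have hc : Measurable (fun r : E d × E d => cost r.1 r.2) := by
    unfold cost
    exact (continuous_const.mul ((continuous_fst.sub continuous_snd).norm.pow 2)).measurable
  have hfmm : Measurable (fun r : E d × E d =>
      Real.exp ((φ r.1 + (ψ₀ r.2 + ψ₁ r.2) / 2 - cost r.1 r.2) / ε)) := by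
    apply Measurable.exp
    exact (((hφm.comp measurable_fst).add
      (((hψ₀m.add hψ₁m).div_const 2).comp measurable_snd)).sub hc).div_const ε
  have hbi : Integrable (fun r : E d × E d =>
      (Real.exp ((φ r.1 + ψ₀ r.2 - cost r.1 r.2) / ε)
        + Real.exp ((φ r.1 + ψ₁ r.2 - cost r.1 r.2) / ε)) / 2) volume :=
    (hf₀i.add hf₁i).div_const 2
  have hfmi : Integrable (fun r : E d × E d =>
      Real.exp ((φ r.1 + (ψ₀ r.2 + ψ₁ r.2) / 2 - cost r.1 r.2) / ε)) volume := by
    refine hbi.mono' hfmm.aestronglyMeasurable (Filter.Eventually.of_forall fun r => ?_)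
    rw [Real.norm_eq_abs, abs_of_pos (Real.exp_pos _)]
    exact key r
  -- strict integral inequality via the nonnegative gap
  have hgi : Integrable (fun r : E d × E d =>
      (Real.exp ((φ r.1 + ψ₀ r.2 - cost r.1 r.2) / ε)
        + Real.exp ((φ r.1 + ψ₁ r.2 - cost r.1 r.2) / ε)) / 2
      - Real.exp ((φ r.1 + (ψ₀ r.2 + ψ₁ r.2) / 2 - cost r.1 r.2) / ε)) volume :=
    hbi.sub hfmi
  have hg0 : 0 ≤ (fun r : E d × E d =>
      (Real.exp ((φ r.1 + ψ₀ r.2 - cost r.1 r.2) / ε)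
        + Real.exp ((φ r.1 + ψ₁ r.2 - cost r.1 r.2) / ε)) / 2
      - Real.exp ((φ r.1 + (ψ₀ r.2 + ψ₁ r.2) / 2 - cost r.1 r.2) / ε)) :=
    fun r => sub_nonneg.mpr (key r)
  have hsupp : (Set.univ ×ˢ {y : E d | ψ₀ y ≠ ψ₁ y}) ⊆ Function.support (fun r : E d × E d =>
      (Real.exp ((φ r.1 + ψ₀ r.2 - cost r.1 r.2) / ε)
        + Real.exp ((φ r.1 + ψ₁ r.2 - cost r.1 r.2) / ε)) / 2
      - Real.exp ((φ r.1 + (ψ₀ r.2 + ψ₁ r.2) / 2 - cost r.1 r.2) / ε)) := by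
    rintro ⟨x, y⟩ ⟨-, hy⟩
    exact ne_of_gt (sub_pos.mpr (keyStrict (x, y) hy))
  have hEpos : 0 < (volume : Measure (E d)) Set.univ :=
    isOpen_univ.measure_pos volume Set.univ_nonempty
  have hgpos : 0 < ∫ r : E d × E d,
      ((Real.exp ((φ r.1 + ψ₀ r.2 - cost r.1 r.2) / ε)
        + Real.exp ((φ r.1 + ψ₁ r.2 - cost r.1 r.2) / ε)) / 2
      - Real.exp ((φ r.1 + (ψ₀ r.2 + ψ₁ r.2) / 2 - cost r.1 r.2) / ε)) := by
    rw [MeasureTheory.integral_pos_iff_support_of_nonneg hg0 hgi]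
    refine lt_of_lt_of_le ?_ (measure_mono hsupp)
    rw [MeasureTheory.Measure.volume_eq_prod, Measure.prod_prod]
    exact ENNReal.mul_pos hEpos.ne' hne.ne'
  have hint : (∫ r : E d × E d,
        Real.exp ((φ r.1 + (ψ₀ r.2 + ψ₁ r.2) / 2 - cost r.1 r.2) / ε))
      < ((∫ r : E d × E d, Real.exp ((φ r.1 + ψ₀ r.2 - cost r.1 r.2) / ε))
        + ∫ r : E d × E d, Real.exp ((φ r.1 + ψ₁ r.2 - cost r.1 r.2) / ε)) / 2 := by
    rw [integral_sub hbi hfmi, integral_div, integral_add hf₀i hf₁i] at hgpos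
    linarith
  have hψint : (∫ y, (ψ₀ y + ψ₁ y) / 2 ∂ν)
      = ((∫ y, ψ₀ y ∂ν) + ∫ y, ψ₁ y ∂ν) / 2 := by
    rw [integral_div, integral_add hψ₀i hψ₁i]
  simp only [Dent, gt_iff_lt]
  rw [hψint]
  nlinarith [mul_lt_mul_of_pos_left hint hε]
end
end

section
/- (Equality case in the (c,ε)-transform maximality, Proposition 3.1.) Assume ν is absolutely continuous with density q positive Lebesgue-a.e. Let φ : E → ℝ be measurable such that for Lebesgue-a.e. y the integral I_φ(y) := ∫ exp((φ(x) − c(x,y))/ε) dx lies in (0,∞), define ψ_φ(y) := ε log q(y) − ε log I_φ(y), and assume (φ, ψ_φ) is admissible. Then for every ψ with (φ,ψ) admissible: D_ε(φ,ψ) = D_ε(φ,ψ_φ) if and only if ψ = ψ_φ ν-almost everywhere. -/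
open MeasureTheory

noncomputable section

theorem ceps_transform_equality_case {d : ℕ} (hd : 1 ≤ d) {ε : ℝ} (hε : 0 < ε)
    (μ ν : Measure (E d)) [IsProbabilityMeasure μ] [IsProbabilityMeasure ν]
    (q : E d → ℝ) (hqm : Measurable q)
    (hν : ν = volume.withDensity fun y => ENNReal.ofReal (q y))
    (hqpos : ∀ᵐ y ∂(volume : Measure (E d)), 0 < q y)
    (φ : E d → ℝ) (hφm : Measurable φ)
    (hI : ∀ᵐ y ∂(volume : Measure (E d)),
      Integrable (fun x => Real.exp ((φ x - cost x y) / ε)) volume ∧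
      0 < ∫ x, Real.exp ((φ x - cost x y) / ε))
    (ψφ : E d → ℝ)
    (hψφ : ψφ = fun y =>
      ε * Real.log (q y) - ε * Real.log (∫ x, Real.exp ((φ x - cost x y) / ε)))
    (hadm : Admissible ε μ ν φ ψφ) :
    ∀ ψ : E d → ℝ, Admissible ε μ ν φ ψ →
      (Dent ε μ ν φ ψ = Dent ε μ ν φ ψφ ↔ ψ =ᵐ[ν] ψφ) := by
  intro ψ hadm'
  set I : E d → ℝ := fun y => ∫ x, Real.exp ((φ x - cost x y) / ε) with hIdef
  have hεne : ε ≠ 0 := hε.ne'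
  -- inner integral splitting, for any ψ' and any y
  have key : ∀ (ψ' : E d → ℝ) (y : E d),
      (∫ x, Real.exp ((φ x + ψ' y - cost x y) / ε))
        = Real.exp (ψ' y / ε) * I y := by
    intro ψ' y
    have : ∀ x, Real.exp ((φ x + ψ' y - cost x y) / ε)
        = Real.exp (ψ' y / ε) * Real.exp ((φ x - cost x y) / ε) := by
      intro x
      rw [← Real.exp_add]
      congr 1
      field_simp
      ring
    simp_rw [this]
    exact integral_const_mul _ _
  -- double integral reduction
  have dbl : ∀ (ψ' : E d → ℝ),
      Integrable (fun r : E d × E d => Real.exp ((φ r.1 + ψ' r.2 - cost r.1 r.2) / ε)) volume →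
      (∫ r : E d × E d, Real.exp ((φ r.1 + ψ' r.2 - cost r.1 r.2) / ε))
        = ∫ y, Real.exp (ψ' y / ε) * I y := by
    intro ψ' hint
    rw [Measure.volume_eq_prod] at hint ⊢
    rw [MeasureTheory.integral_prod_symm _ hint]
    exact integral_congr_ae (Filter.Eventually.of_forall fun y => key ψ' y)
  -- a.e. identity: exp(ψφ y / ε) * I y = q y
  have hψφI : ∀ᵐ y ∂(volume : Measure (E d)), Real.exp (ψφ y / ε) * I y = q y := by
    filter_upwards [hqpos, hI] with y hq hIy
    have hIpos : 0 < I y := hIy.2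
    have : ψφ y / ε = Real.log (q y) - Real.log (I y) := by
      rw [hψφ]; field_simp; ring
    rw [this, Real.exp_sub, Real.exp_log hq, Real.exp_log hIpos]
    field_simp
  -- placeholderB
  -- ∫ q = 1
  have hq1 : (∫ y, q y) = 1 := by
    have huniv : ν Set.univ = 1 := measure_univ
    rw [hν, withDensity_apply _ MeasurableSet.univ, setLIntegral_univ] at huniv
    rw [integral_eq_lintegral_of_nonneg_ae (hqpos.mono fun y h => h.le)
      hqm.aestronglyMeasurable, huniv]
    simp
  -- the u function
  set u : E d → ℝ := fun y => (ψ y - ψφ y) / ε with hudef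
  -- a.e. identity: exp(ψ y/ε) * I y = exp(u y) * q y
  have hkey2 : ∀ᵐ y ∂(volume : Measure (E d)),
      Real.exp (ψ y / ε) * I y = Real.exp (u y) * q y := by
    filter_upwards [hψφI] with y h
    have h2 : ψ y / ε = (ψ y - ψφ y) / ε + ψφ y / ε := by ring
    simp only [hudef]
    rw [h2, Real.exp_add, mul_assoc, h]
  -- Dent for ψφ
  have hDψφ : Dent ε μ ν φ ψφ = (∫ x, φ x ∂μ) + (∫ y, ψφ y ∂ν) - ε := by
    unfold Dent
    rw [dbl ψφ hadm.2.2.2.2, integral_congr_ae hψφI, hq1, mul_one]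
  -- Dent for ψ
  have hDψ : Dent ε μ ν φ ψ
      = (∫ x, φ x ∂μ) + (∫ y, ψ y ∂ν) - ε * ∫ y, Real.exp (u y) * q y := by
    unfold Dent
    rw [dbl ψ hadm'.2.2.2.2, integral_congr_ae hkey2]
  -- integrability of exp(u) * q w.r.t. volume
  have hint1 : Integrable (fun y => Real.exp (u y) * q y) volume := by
    have h0 : Integrable (fun y => Real.exp (ψ y / ε) * I y) volume := by
      have := hadm'.2.2.2.2
      rw [Measure.volume_eq_prod] at this
      exact (this.integral_prod_right).congr
        (Filter.Eventually.of_forall fun y => key ψ y)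
    exact h0.congr hkey2
  -- transfer: Integrable (exp ∘ u) ν
  have htr : ∀ᵐ y ∂(volume : Measure (E d)),
      (ENNReal.ofReal (q y)).toReal = q y := by
    filter_upwards [hqpos] with y hy
    exact ENNReal.toReal_ofReal hy.le
  have hintν : Integrable (fun y => Real.exp (u y)) ν := by
    rw [hν, integrable_withDensity_iff (hqm.ennreal_ofReal)
      (Filter.Eventually.of_forall fun y => ENNReal.ofReal_lt_top)]
    refine hint1.congr ?_
    filter_upwards [htr] with y hy
    rw [hy]
  -- ∫ exp(u) dν = ∫ exp(u) * q dvolume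
  have hIeq : (∫ y, Real.exp (u y) ∂ν) = ∫ y, Real.exp (u y) * q y := by
    rw [hν, show (fun y => ENNReal.ofReal (q y)) = fun y => ((q y).toNNReal : ENNReal) from rfl,
      integral_withDensity_eq_integral_smul₀ (hqm.real_toNNReal).aemeasurable]
    refine integral_congr_ae ?_
    filter_upwards [hqpos] with y hy
    simp [NNReal.smul_def, Real.coe_toNNReal _ hy.le, mul_comm]
  -- u is ν-integrable
  have huint : Integrable u ν := (hadm'.2.2.2.1.sub hadm.2.2.2.1).div_const ε
  -- G = exp u - u - 1
  set G : E d → ℝ := fun y => Real.exp (u y) - u y - 1 with hGdef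
  have hGnn : 0 ≤ᵐ[ν] G := by
    refine Filter.Eventually.of_forall fun y => ?_
    have h2 := Real.add_one_le_exp (u y)
    show (0 : E d → ℝ) y ≤ G y
    simp only [Pi.zero_apply, hGdef]
    linarith
  have hGint : Integrable G ν := (hintν.sub huint).sub (integrable_const 1)
  -- ∫ u dν in terms of ψ, ψφ
  have hu_int_eq : (∫ y, u y ∂ν) = ((∫ y, ψ y ∂ν) - ∫ y, ψφ y ∂ν) / ε := by
    rw [← integral_sub hadm'.2.2.2.1 hadm.2.2.2.1]
    exact integral_div ε _
  -- main identity: Dent difference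
  have hdiff : Dent ε μ ν φ ψ - Dent ε μ ν φ ψφ = -ε * ∫ y, G y ∂ν := by
    have hsub : Integrable (fun y => Real.exp (u y) - u y) ν := by
      exact hintν.sub huint
    have h2 : (∫ y, G y ∂ν) = (∫ y, Real.exp (u y) ∂ν) - (∫ y, u y ∂ν) - 1 := by
      calc (∫ y, G y ∂ν) = ∫ y, (Real.exp (u y) - u y) - 1 ∂ν := rfl
        _ = (∫ y, Real.exp (u y) - u y ∂ν) - ∫ _, (1:ℝ) ∂ν :=
            integral_sub hsub (integrable_const 1)
        _ = (∫ y, Real.exp (u y) ∂ν) - (∫ y, u y ∂ν) - 1 := by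
            rw [integral_sub hintν huint]; simp
    rw [hDψ, hDψφ, h2, hu_int_eq, hIeq]
    field_simp
    ring
  constructor
  · intro heq
    have h0 : (∫ y, G y ∂ν) = 0 := by
      have : -ε * ∫ y, G y ∂ν = 0 := by rw [← hdiff, heq]; ring
      have hne : -ε ≠ 0 := by simpa using hεne
      exact (mul_eq_zero.1 this).resolve_left hne
    have hG0 : G =ᵐ[ν] 0 := (integral_eq_zero_iff_of_nonneg_ae hGnn hGint).1 h0
    filter_upwards [hG0] with y hy
    simp only [hGdef, Pi.zero_apply] at hy
    have hu0 : u y = 0 := by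
      by_contra hne
      have := Real.add_one_lt_exp hne
      linarith
    simp only [hudef] at hu0
    rcases div_eq_zero_iff.mp hu0 with h | h
    · linarith
    · exact absurd h hεne
  · intro heq
    have hG0 : G =ᵐ[ν] 0 := by
      filter_upwards [heq] with y hy
      show G y = (0 : E d → ℝ) y
      simp [hGdef, hudef, hy]
    have h0 : (∫ y, G y ∂ν) = 0 := by
      rw [integral_congr_ae hG0]; simp
    have : Dent ε μ ν φ ψ - Dent ε μ ν φ ψφ = 0 := by rw [hdiff, h0]; ring
    linarith
end
end

section
/- (Brenier's theorem, uniqueness of the map.) Let μ and ν be Borel probability measures on E with finite second moments, and assume μ is absolutely continuous with respect to Lebesgue measure. If u₁, u₂ : E → ℝ are convex functions and T₁, T₂ : E → E are Borel maps such that, for each i, u_i is differentiable at μ-a.e. x with gradient T_i(x) and the pushforward of μ under T_i equals ν, then T₁ = T₂ μ-almost everywhere. -/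
open MeasureTheory

noncomputable section

/-!
Let `T = ∇u` with `u` convex and let `S` have the same law as `T`. A gradient of a convex function
is a subgradient, so the Fenchel–Young inequality `⟪y, x⟫ ≤ u x + u* y` is an equality at
`y = T x`. Integrating it along `y = S x` and using that `u* ∘ S` and `u* ∘ T` have the same
integral gives `∫ ⟪S x, x⟫ ≤ ∫ ⟪T x, x⟫`. Applied to `T₁ = ∇u₁` and `T₂ = ∇u₂` in both orders,
this forces equality, hence equality in Fenchel–Young almost everywhere: `T₂ x` is a subgradient
of `u₁` at `x`. At a point of differentiability the subgradient is unique, so `T₂ = T₁` a.e.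
-/

open Set ProbabilityTheory
open scoped RealInnerProductSpace

variable {F : Type*} [NormedAddCommGroup F] [InnerProductSpace ℝ F] {u : F → ℝ} {p q x y : F}

def HasSubgradientAt (u : F → ℝ) (p x : F) : Prop :=
  ∀ y, u x + ⟪p, y - x⟫ ≤ u y

theorem hasSubgradientAt_iff :
    HasSubgradientAt u p x ↔ ∀ w, ⟪p, w⟫ - u w ≤ ⟪p, x⟫ - u x := by
  refine forall_congr' fun w => ?_
  rw [inner_sub_right]
  constructor <;> intro h <;> linarith

theorem HasSubgradientAt.inner_le_of_hasLineDerivAt {v : F} {D : ℝ}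
    (hp : HasSubgradientAt u p x) (hD : HasLineDerivAt ℝ u D x v) : ⟪p, v⟫ ≤ D := by
  refine ge_of_tendsto hD.tendsto_slope_zero_right ?_
  filter_upwards [self_mem_nhdsWithin] with t (ht : 0 < t)
  have hstep := hp (x + t • v)
  rw [add_sub_cancel_left, real_inner_smul_right] at hstep
  rw [smul_eq_mul, le_inv_mul_iff₀ ht]
  linarith

theorem HasGradientAt.eq_of_hasSubgradientAt [CompleteSpace F] (hp : HasGradientAt u p x)
    (hq : HasSubgradientAt u q x) : q = p := by
  have hle : ⟪q, q - p⟫ ≤ ⟪p, q - p⟫ :=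
    hq.inner_le_of_hasLineDerivAt (hp.hasFDerivAt.hasLineDerivAt (q - p))
  rwa [← sub_nonpos, ← inner_sub_left, real_inner_self_nonpos, sub_eq_zero] at hle

theorem ConvexOn.hasSubgradientAt_of_hasGradientAt [CompleteSpace F] (hu : ConvexOn ℝ univ u)
    (hp : HasGradientAt u p x) : HasSubgradientAt u p x := by
  intro y
  have hline : ConvexOn ℝ univ (fun t : ℝ => u (x + t • (y - x))) := by
    simpa [Function.comp_def, AffineMap.lineMap_apply, add_comm] using
      hu.comp_affineMap (AffineMap.lineMap x y)
  have hderiv : HasDerivAt (fun t : ℝ => u (x + t • (y - x))) ⟪p, y - x⟫ 0 :=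
    hp.hasFDerivAt.hasLineDerivAt (y - x)
  have hslope := hline.le_slope_of_hasDerivAt (mem_univ 0) (mem_univ 1) one_pos hderiv
  simp only [slope_def_field, one_smul, add_sub_cancel, zero_smul, add_zero, sub_zero,
    div_one] at hslope
  linarith

/-- The convex conjugate `u* y = sup_w (⟪y, w⟫ - u w)`; it takes the junk value `0` outside
`fenchelDomain u`, where the supremum is infinite. -/
def fenchelConjugate (u : F → ℝ) (y : F) : ℝ :=
  ⨆ w, ⟪y, w⟫ - u w

def fenchelDomain (u : F → ℝ) : Set F :=
  {y | BddAbove (range fun w => ⟪y, w⟫ - u w)}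

theorem inner_le_add_fenchelConjugate (hy : y ∈ fenchelDomain u) (x : F) :
    ⟪y, x⟫ ≤ u x + fenchelConjugate u y := by
  have := le_ciSup hy x
  unfold fenchelConjugate
  linarith

theorem HasSubgradientAt.mem_fenchelDomain (hp : HasSubgradientAt u p x) :
    p ∈ fenchelDomain u :=
  ⟨⟪p, x⟫ - u x, forall_mem_range.2 (hasSubgradientAt_iff.1 hp)⟩

theorem HasSubgradientAt.fenchelConjugate_eq (hp : HasSubgradientAt u p x) :
    fenchelConjugate u p = ⟪p, x⟫ - u x :=
  le_antisymm (ciSup_le (hasSubgradientAt_iff.1 hp))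
    (by linarith [inner_le_add_fenchelConjugate hp.mem_fenchelDomain x])

theorem hasSubgradientAt_of_add_fenchelConjugate_le (hy : y ∈ fenchelDomain u)
    (h : u x + fenchelConjugate u y ≤ ⟪y, x⟫) : HasSubgradientAt u y x :=
  hasSubgradientAt_iff.2 fun w => by linarith [inner_le_add_fenchelConjugate hy w]

theorem exists_countable_fenchelConjugate_eq [TopologicalSpace.SeparableSpace F]
    (hu : Continuous u) :
    ∃ s : Set F, s.Countable ∧
      (∀ y, fenchelConjugate u y = ⨆ w : s, ⟪y, (w : F)⟫ - u w) ∧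
      ∀ y, y ∈ fenchelDomain u ↔ BddAbove (range fun w : s => ⟪y, (w : F)⟫ - u w) := by
  obtain ⟨s, hs_count, hs_dense⟩ := TopologicalSpace.exists_countable_dense F
  refine ⟨s, hs_count, fun y => (hs_dense.ciSup' (by fun_prop)).symm, fun y => ?_⟩
  change BddAbove _ ↔ _
  rw [BddAbove, BddAbove,
    ← hs_dense.upperBounds_image (f := fun w => ⟪y, w⟫ - u w) (by fun_prop), image_eq_range]

section Transport

variable [TopologicalSpace.SeparableSpace F] [MeasurableSpace F] [OpensMeasurableSpace F]
  {μ : Measure F} {T S : F → F}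

theorem Continuous.measurable_fenchelConjugate (hu : Continuous u) :
    Measurable (fenchelConjugate u) := by
  obtain ⟨s, hs, hconj, -⟩ := exists_countable_fenchelConjugate_eq hu
  have := hs.to_subtype
  simp_rw [funext hconj]
  exact Measurable.iSup fun w => by fun_prop

theorem Continuous.measurableSet_fenchelDomain (hu : Continuous u) :
    MeasurableSet (fenchelDomain u) := by
  obtain ⟨s, hs, -, hdom⟩ := exists_countable_fenchelConjugate_eq hu
  have := hs.to_subtype
  simp_rw [Set.ext hdom]
  exact measurableSet_bddAbove_range fun w => by fun_prop

theorem ae_mem_fenchelDomain (hu : Continuous u) (hTS : IdentDistrib T S μ μ)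
    (hsub : ∀ᵐ x ∂μ, HasSubgradientAt u (T x) x) : ∀ᵐ x ∂μ, S x ∈ fenchelDomain u :=
  hTS.ae_mem_snd hu.measurableSet_fenchelDomain (hsub.mono fun _ hx => hx.mem_fenchelDomain)

theorem integrable_fenchelConjugate_comp (hu : Continuous u) (hTS : IdentDistrib T S μ μ)
    (hsub : ∀ᵐ x ∂μ, HasSubgradientAt u (T x) x) (hu_int : Integrable u μ)
    (hT : Integrable (fun x => ⟪T x, x⟫) μ) :
    Integrable (fun x => fenchelConjugate u (S x)) μ := by
  refine (hTS.comp hu.measurable_fenchelConjugate).integrable_snd ((hT.sub hu_int).congr ?_)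
  filter_upwards [hsub] with x hx using hx.fenchelConjugate_eq.symm

theorem integral_add_fenchelConjugate_comp (hu : Continuous u) (hTS : IdentDistrib T S μ μ)
    (hsub : ∀ᵐ x ∂μ, HasSubgradientAt u (T x) x) (hu_int : Integrable u μ)
    (hT : Integrable (fun x => ⟪T x, x⟫) μ) :
    ∫ x, (u x + fenchelConjugate u (S x)) ∂μ = ∫ x, ⟪T x, x⟫ ∂μ := by
  have hlaw : ∫ x, fenchelConjugate u (S x) ∂μ = ∫ x, ⟪T x, x⟫ ∂μ - ∫ x, u x ∂μ := by
    rw [← integral_sub hT hu_int]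
    refine (hTS.comp hu.measurable_fenchelConjugate).integral_eq.symm.trans (integral_congr_ae ?_)
    filter_upwards [hsub] with x hx using hx.fenchelConjugate_eq
  rw [integral_add hu_int (integrable_fenchelConjugate_comp hu hTS hsub hu_int hT), hlaw,
    add_sub_cancel]

theorem integral_inner_le_of_hasSubgradientAt (hu : Continuous u) (hTS : IdentDistrib T S μ μ)
    (hsub : ∀ᵐ x ∂μ, HasSubgradientAt u (T x) x) (hu_int : Integrable u μ)
    (hT : Integrable (fun x => ⟪T x, x⟫) μ) (hS : Integrable (fun x => ⟪S x, x⟫) μ) :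
    ∫ x, ⟪S x, x⟫ ∂μ ≤ ∫ x, ⟪T x, x⟫ ∂μ := by
  rw [← integral_add_fenchelConjugate_comp hu hTS hsub hu_int hT]
  refine integral_mono_ae hS
    (hu_int.add (integrable_fenchelConjugate_comp hu hTS hsub hu_int hT)) ?_
  filter_upwards [ae_mem_fenchelDomain hu hTS hsub] with x hx
    using inner_le_add_fenchelConjugate hx x

/-- Equality in `integral_inner_le_of_hasSubgradientAt` forces equality in the Fenchel–Young
inequality almost everywhere, which makes `S x` a subgradient at `x` as well. -/
theorem ae_hasSubgradientAt_of_integral_inner_le (hu : Continuous u)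
    (hTS : IdentDistrib T S μ μ) (hsub : ∀ᵐ x ∂μ, HasSubgradientAt u (T x) x)
    (hu_int : Integrable u μ) (hT : Integrable (fun x => ⟪T x, x⟫) μ)
    (hS : Integrable (fun x => ⟪S x, x⟫) μ) (hTS_le : ∫ x, ⟪T x, x⟫ ∂μ ≤ ∫ x, ⟪S x, x⟫ ∂μ) :
    ∀ᵐ x ∂μ, HasSubgradientAt u (S x) x := by
  have hdom := ae_mem_fenchelDomain hu hTS hsub
  have hyoung : (fun x => ⟪S x, x⟫) ≤ᵐ[μ] fun x => u x + fenchelConjugate u (S x) := by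
    filter_upwards [hdom] with x hx using inner_le_add_fenchelConjugate hx x
  have hint := hu_int.add (integrable_fenchelConjugate_comp hu hTS hsub hu_int hT)
  have heq : (fun x => ⟪S x, x⟫) =ᵐ[μ] fun x => u x + fenchelConjugate u (S x) := by
    refine (integral_eq_iff_of_ae_le hS hint hyoung).1 (le_antisymm ?_ ?_)
    · exact integral_mono_ae hS hint hyoung
    · exact (integral_add_fenchelConjugate_comp hu hTS hsub hu_int hT).trans_le hTS_le
  filter_upwards [hdom, heq] with x hx hxeq
  exact hasSubgradientAt_of_add_fenchelConjugate_le hx hxeq.ge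

end Transport

theorem integrable_of_ae_hasSubgradientAt [MeasurableSpace F] {μ : Measure F}
    [IsFiniteMeasure μ] {T : F → F} (hu : AEStronglyMeasurable u μ)
    (hsub : ∀ᵐ x ∂μ, HasSubgradientAt u (T x) x) (hid : Integrable id μ)
    (hT : Integrable (fun x => ⟪T x, x⟫) μ) : Integrable u μ := by
  rcases eq_zero_or_neZero μ with rfl | _
  · exact integrable_zero_measure
  obtain ⟨x₀, hx₀⟩ := hsub.exists
  refine integrable_of_le_of_le (g₁ := fun x => u x₀ + ⟪T x₀, x - x₀⟫)
    (g₂ := fun x => u 0 + ⟪T x, x⟫) hu (ae_of_all _ hx₀) ?_ ?_ ?_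
  · filter_upwards [hsub] with x hx
    have := hx 0
    rw [zero_sub, inner_neg_right] at this
    linarith
  · exact (integrable_const _).add ((hid.sub (integrable_const x₀)).const_inner _)
  · exact (integrable_const _).add hT

theorem MeasureTheory.MemLp.integrable_inner {α : Type*} [MeasurableSpace α] {μ : Measure α}
    {f g : α → F} (hf : MemLp f 2 μ) (hg : MemLp g 2 μ) :
    Integrable (fun x => ⟪f x, g x⟫) μ :=
  (L2.integrable_inner (hf.toLp f) (hg.toLp g)).congr <| by
    filter_upwards [hf.coeFn_toLp, hg.coeFn_toLp] with x hfx hgx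
    rw [hfx, hgx]

theorem brenier_uniqueness_general {d : ℕ}
    (μ ν : Measure (E d)) [IsProbabilityMeasure μ]
    (hμ2 : Integrable (fun x : E d => ‖x‖ ^ 2) μ)
    (hν2 : Integrable (fun y : E d => ‖y‖ ^ 2) ν)
    (u₁ u₂ : E d → ℝ) (T₁ T₂ : E d → E d)
    (hu₁ : ConvexOn ℝ Set.univ u₁) (hu₂ : ConvexOn ℝ Set.univ u₂)
    (hT₁m : Measurable T₁) (hT₂m : Measurable T₂)
    (hg₁ : ∀ᵐ x ∂μ, HasGradientAt u₁ (T₁ x) x)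
    (hg₂ : ∀ᵐ x ∂μ, HasGradientAt u₂ (T₂ x) x)
    (hp₁ : μ.map T₁ = ν) (hp₂ : μ.map T₂ = ν) :
    T₁ =ᵐ[μ] T₂ := by
  have hc₁ : Continuous u₁ := continuousOn_univ.1 (hu₁.continuousOn isOpen_univ)
  have hc₂ : Continuous u₂ := continuousOn_univ.1 (hu₂.continuousOn isOpen_univ)
  have hsub₁ := hg₁.mono fun x hx => hu₁.hasSubgradientAt_of_hasGradientAt hx
  have hsub₂ := hg₂.mono fun x hx => hu₂.hasSubgradientAt_of_hasGradientAt hx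
  have hid : MemLp id 2 μ := (memLp_two_iff_integrable_sq_norm aestronglyMeasurable_id).2 hμ2
  have hν : MemLp id 2 ν := (memLp_two_iff_integrable_sq_norm aestronglyMeasurable_id).2 hν2
  have hT₁ : MemLp T₁ 2 μ :=
    (memLp_map_measure_iff aestronglyMeasurable_id hT₁m.aemeasurable).1 (hp₁ ▸ hν)
  have hT₂ : MemLp T₂ 2 μ :=
    (memLp_map_measure_iff aestronglyMeasurable_id hT₂m.aemeasurable).1 (hp₂ ▸ hν)
  have hI : IdentDistrib T₁ T₂ μ μ :=
    ⟨hT₁m.aemeasurable, hT₂m.aemeasurable, hp₁.trans hp₂.symm⟩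
  have hi₁ := hT₁.integrable_inner hid
  have hi₂ := hT₂.integrable_inner hid
  have hui₁ := integrable_of_ae_hasSubgradientAt hc₁.aestronglyMeasurable hsub₁
    (hid.integrable one_le_two) hi₁
  have hui₂ := integrable_of_ae_hasSubgradientAt hc₂.aestronglyMeasurable hsub₂
    (hid.integrable one_le_two) hi₂
  have hle := integral_inner_le_of_hasSubgradientAt hc₂ hI.symm hsub₂ hui₂ hi₂ hi₁
  filter_upwards [ae_hasSubgradientAt_of_integral_inner_le hc₁ hI hsub₁ hui₁ hi₁ hi₂ hle, hg₁]
    with x hsubx hgradx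
  exact (hgradx.eq_of_hasSubgradientAt hsubx).symm

theorem brenier_uniqueness {d : ℕ} (hd : 1 ≤ d)
    (μ ν : Measure (E d)) [IsProbabilityMeasure μ] [IsProbabilityMeasure ν]
    (hμ2 : Integrable (fun x : E d => ‖x‖ ^ 2) μ)
    (hν2 : Integrable (fun y : E d => ‖y‖ ^ 2) ν)
    (hac : μ ≪ (volume : Measure (E d)))
    (u₁ u₂ : E d → ℝ) (T₁ T₂ : E d → E d)
    (hu₁ : ConvexOn ℝ Set.univ u₁) (hu₂ : ConvexOn ℝ Set.univ u₂)
    (hT₁m : Measurable T₁) (hT₂m : Measurable T₂)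
    (hg₁ : ∀ᵐ x ∂μ, HasGradientAt u₁ (T₁ x) x)
    (hg₂ : ∀ᵐ x ∂μ, HasGradientAt u₂ (T₂ x) x)
    (hp₁ : μ.map T₁ = ν) (hp₂ : μ.map T₂ = ν) :
    T₁ =ᵐ[μ] T₂ :=
  brenier_uniqueness_general μ ν hμ2 hν2 u₁ u₂ T₁ T₂ hu₁ hu₂ hT₁m hT₂m hg₁ hg₂ hp₁ hp₂
end
end

section
/- (Metric derivative of Lipschitz curves, Appendix B.) Let X be a metric space, L > 0, and ρ : ℝ → X a curve satisfying dist(ρ(s), ρ(t)) ≤ L·|s − t| for all s, t ∈ [0,1]. Then there exists a measurable function g : ℝ → ℝ with 0 ≤ g(t) ≤ L such that: (i) for Lebesgue-a.e. t ∈ (0,1), dist(ρ(t+h), ρ(t))/|h| tends to g(t) as h → 0; and (ii) for all 0 ≤ t ≤ s ≤ 1, dist(ρ(t), ρ(s)) ≤ ∫_t^s g(a) da. -/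
/-!
Extend `ρ` to a globally Lipschitz curve `σ` by clamping time to `[0, 1]`. For a dense
sequence `qₙ` the functions `φₙ = dist (σ ·) (σ qₙ)` are real Lipschitz, hence differentiable
a.e. with `φₙ b - φₙ a = ∫ₐᵇ φₙ'`; take `g = supₙ |φₙ'|`. As
`dist (σ a) (σ b) ≤ 2 φₙ a + (φₙ b - φₙ a)` and `φₙ a` can be made arbitrarily small,
`dist (σ a) (σ b) ≤ ∫ₐᵇ g` for `a ≤ b`, so at a Lebesgue point `x` of `g` the difference
quotient `dist (σ (x + h)) (σ x) / |h|` is asymptotically at most `g x`. Where every `φₙ` is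
differentiable it is asymptotically at least every `|φₙ' x|`, hence at least `g x`.
-/

open MeasureTheory Filter

open Set Topology TopologicalSpace

section

variable {X : Type*} [PseudoMetricSpace X]

theorem HasDerivAt.tendsto_abs_slope_zero {f : ℝ → ℝ} {f' x : ℝ} (hf : HasDerivAt f f' x) :
    Tendsto (fun h => |f (x + h) - f x| / |h|) (𝓝[≠] 0) (𝓝 |f'|) := by
  refine ((continuous_abs.tendsto f').comp (hasDerivAt_iff_tendsto_slope_zero.1 hf)).congr
    fun h => ?_
  simp only [Function.comp_apply, smul_eq_mul, inv_mul_eq_div, abs_div]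

theorem LipschitzWith.sub_le_intervalIntegral_of_deriv_le {f g : ℝ → ℝ} {K : NNReal}
    (hf : LipschitzWith K f) {a b : ℝ} (hab : a ≤ b) (hg : IntervalIntegrable g volume a b)
    (hle : ∀ x, deriv f x ≤ g x) : f b - f a ≤ ∫ x in a..b, g x := by
  have hf_ac := (hf.lipschitzOnWith (s := uIcc a b)).absolutelyContinuousOnInterval
  rw [← hf_ac.integral_deriv_eq_sub]
  exact intervalIntegral.integral_mono_on hab hf_ac.intervalIntegrable_deriv hg fun x _ => hle x

noncomputable def metricDeriv (σ : ℝ → X) (t : ℝ) : ℝ :=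
  ⨆ n, |deriv (fun s => dist (σ s) (σ (denseSeq ℝ n))) t|

theorem measurable_metricDeriv (σ : ℝ → X) : Measurable (metricDeriv σ) :=
  Measurable.iSup fun _ => (measurable_deriv _).abs

namespace LipschitzWith

variable {K : NNReal} {σ : ℝ → X}

theorem dist_left_comp (hσ : LipschitzWith K σ) (p : X) :
    LipschitzWith K (fun s => dist (σ s) p) := by
  simpa [Function.comp_def] using (LipschitzWith.dist_left p).comp hσ

theorem abs_deriv_dist_le (hσ : LipschitzWith K σ) (p : X) (t : ℝ) :
    |deriv (fun s => dist (σ s) p) t| ≤ K := by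
  simpa using norm_deriv_le_of_lipschitz (x₀ := t) (hσ.dist_left_comp p)

theorem bddAbove_abs_deriv_dist (hσ : LipschitzWith K σ) (t : ℝ) :
    BddAbove (range fun n => |deriv (fun s => dist (σ s) (σ (denseSeq ℝ n))) t|) :=
  ⟨K, forall_mem_range.2 fun _ => hσ.abs_deriv_dist_le _ t⟩

theorem metricDeriv_le (hσ : LipschitzWith K σ) (t : ℝ) : metricDeriv σ t ≤ K :=
  ciSup_le fun _ => hσ.abs_deriv_dist_le _ t

theorem deriv_dist_le_metricDeriv (hσ : LipschitzWith K σ) (n : ℕ) (t : ℝ) :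
    deriv (fun s => dist (σ s) (σ (denseSeq ℝ n))) t ≤ metricDeriv σ t :=
  (le_abs_self _).trans (le_ciSup (hσ.bddAbove_abs_deriv_dist t) n)

theorem metricDeriv_nonneg (hσ : LipschitzWith K σ) (t : ℝ) : 0 ≤ metricDeriv σ t :=
  (abs_nonneg _).trans (le_ciSup (hσ.bddAbove_abs_deriv_dist t) 0)

theorem locallyIntegrable_metricDeriv (hσ : LipschitzWith K σ) :
    LocallyIntegrable (metricDeriv σ) := by
  refine locallyIntegrable_iff.2 fun s hs => Measure.integrableOn_of_bounded (M := K)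
    hs.measure_lt_top.ne (measurable_metricDeriv σ).aestronglyMeasurable (ae_of_all _ fun t => ?_)
  rw [Real.norm_of_nonneg (hσ.metricDeriv_nonneg t)]
  exact hσ.metricDeriv_le t

theorem intervalIntegrable_metricDeriv (hσ : LipschitzWith K σ) (a b : ℝ) :
    IntervalIntegrable (metricDeriv σ) volume a b :=
  (hσ.locallyIntegrable_metricDeriv.integrableOn_isCompact isCompact_uIcc).intervalIntegrable

theorem dist_le_intervalIntegral_metricDeriv (hσ : LipschitzWith K σ) {a b : ℝ} (hab : a ≤ b) :
    dist (σ a) (σ b) ≤ ∫ t in a..b, metricDeriv σ t := by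
  refine le_of_forall_pos_le_add fun ε hε => ?_
  obtain ⟨n, hn⟩ : ∃ n, dist (σ a) (σ (denseSeq ℝ n)) < ε / 2 :=
    (denseRange_denseSeq ℝ).exists_mem_open
      (isOpen_lt (continuous_const.dist hσ.continuous) continuous_const)
      ⟨a, by simpa using half_pos hε⟩
  have hφ := (hσ.dist_left_comp (σ (denseSeq ℝ n))).sub_le_intervalIntegral_of_deriv_le hab
    (hσ.intervalIntegrable_metricDeriv a b) (hσ.deriv_dist_le_metricDeriv n)
  linarith [dist_triangle_right (σ a) (σ b) (σ (denseSeq ℝ n))]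

theorem dist_le_abs_intervalIntegral_metricDeriv (hσ : LipschitzWith K σ) (a b : ℝ) :
    dist (σ a) (σ b) ≤ |∫ t in a..b, metricDeriv σ t| := by
  rcases le_total a b with hab | hba
  · exact (hσ.dist_le_intervalIntegral_metricDeriv hab).trans (le_abs_self _)
  · rw [dist_comm, intervalIntegral.integral_symm, abs_neg]
    exact (hσ.dist_le_intervalIntegral_metricDeriv hba).trans (le_abs_self _)

theorem ae_tendsto_dist_div_metricDeriv (hσ : LipschitzWith K σ) :
    ∀ᵐ x, Tendsto (fun h => dist (σ (x + h)) (σ x) / |h|) (𝓝[≠] 0) (𝓝 (metricDeriv σ x)) := by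
  filter_upwards
    [ae_all_iff.2 fun n => (hσ.dist_left_comp (σ (denseSeq ℝ n))).ae_differentiableAt_of_real,
    LocallyIntegrable.ae_hasDerivAt_integral hσ.locallyIntegrable_metricDeriv] with x hdiff hG
  refine tendsto_order.2 ⟨fun c hc => ?_, fun c hc => ?_⟩
  · obtain ⟨n, hn⟩ := exists_lt_of_lt_ciSup hc
    filter_upwards [(hdiff n).hasDerivAt.tendsto_abs_slope_zero.eventually_const_lt hn] with h hh
    exact hh.trans_le (div_le_div_of_nonneg_right (abs_dist_sub_le _ _ _) (abs_nonneg h))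
  · have hslope := (hG 0).tendsto_abs_slope_zero
    rw [abs_of_nonneg (hσ.metricDeriv_nonneg x)] at hslope
    filter_upwards [hslope.eventually_lt_const hc] with h hh
    refine lt_of_le_of_lt (div_le_div_of_nonneg_right ?_ (abs_nonneg h)) hh
    rw [intervalIntegral.integral_interval_sub_left (hσ.intervalIntegrable_metricDeriv _ _)
      (hσ.intervalIntegrable_metricDeriv _ _), dist_comm]
    exact hσ.dist_le_abs_intervalIntegral_metricDeriv _ _

end LipschitzWith

end

theorem metric_derivative_of_lipschitz_general {X : Type*} [MetricSpace X]
    (L : ℝ) (ρ : ℝ → X)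
    (hlip : ∀ s ∈ Set.Icc (0 : ℝ) 1, ∀ t ∈ Set.Icc (0 : ℝ) 1,
      dist (ρ s) (ρ t) ≤ L * |s - t|) :
    ∃ g : ℝ → ℝ, Measurable g ∧ (∀ t, 0 ≤ g t ∧ g t ≤ L) ∧
      (∀ᵐ t ∂(volume.restrict (Set.Ioo (0 : ℝ) 1)),
        Tendsto (fun h : ℝ => dist (ρ (t + h)) (ρ t) / |h|)
          (nhdsWithin 0 {(0 : ℝ)}ᶜ) (nhds (g t))) ∧
      ∀ t s : ℝ, 0 ≤ t → t ≤ s → s ≤ 1 →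
        dist (ρ t) (ρ s) ≤ ∫ a in Set.Icc t s, g a := by
  have hL : 0 ≤ L := by simpa using dist_nonneg.trans (hlip 0 (by simp) 1 (by simp))
  have hρ : LipschitzOnWith L.toNNReal ρ (Icc 0 1) :=
    LipschitzOnWith.of_dist_le_mul fun s hs t ht => by
      simpa [Real.coe_toNNReal L hL, Real.dist_eq] using hlip s hs t ht
  set σ : ℝ → X := fun t => ρ (projIcc 0 1 zero_le_one t)
  have hσ : LipschitzWith L.toNNReal σ := by
    rw [← mul_one L.toNNReal]
    exact hρ.to_restrict.comp (LipschitzWith.projIcc zero_le_one)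
  have hσρ : EqOn σ ρ (Icc 0 1) := fun t ht => by simp [σ, projIcc_of_mem _ ht]
  refine ⟨metricDeriv σ, measurable_metricDeriv σ,
    fun t => ⟨hσ.metricDeriv_nonneg t, by simpa [hL] using hσ.metricDeriv_le t⟩, ?_,
    fun t s ht hts hs => ?_⟩
  · rw [ae_restrict_iff' measurableSet_Ioo]
    filter_upwards [hσ.ae_tendsto_dist_div_metricDeriv] with x hx hxI
    have hmem : ∀ᶠ h in 𝓝[≠] (0 : ℝ), x + h ∈ Icc (0 : ℝ) 1 :=
      (((continuous_const_add x).tendsto' 0 x (add_zero x)).eventually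
        (Icc_mem_nhds hxI.1 hxI.2)).filter_mono nhdsWithin_le_nhds
    refine hx.congr' (hmem.mono fun h hh => ?_)
    rw [hσρ hh, hσρ (Ioo_subset_Icc_self hxI)]
  · rw [← hσρ ⟨ht, hts.trans hs⟩, ← hσρ ⟨ht.trans hts, hs⟩, integral_Icc_eq_integral_Ioc,
      ← intervalIntegral.integral_of_le hts]
    exact hσ.dist_le_intervalIntegral_metricDeriv hts

theorem metric_derivative_of_lipschitz {X : Type*} [MetricSpace X]
    (L : ℝ) (hL : 0 < L) (ρ : ℝ → X)
    (hlip : ∀ s ∈ Set.Icc (0 : ℝ) 1, ∀ t ∈ Set.Icc (0 : ℝ) 1,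
      dist (ρ s) (ρ t) ≤ L * |s - t|) :
    ∃ g : ℝ → ℝ, Measurable g ∧ (∀ t, 0 ≤ g t ∧ g t ≤ L) ∧
      (∀ᵐ t ∂(volume.restrict (Set.Ioo (0 : ℝ) 1)),
        Tendsto (fun h : ℝ => dist (ρ (t + h)) (ρ t) / |h|)
          (nhdsWithin 0 {(0 : ℝ)}ᶜ) (nhds (g t))) ∧
      ∀ t s : ℝ, 0 ≤ t → t ≤ s → s ≤ 1 →
        dist (ρ t) (ρ s) ≤ ∫ a in Set.Icc t s, g a :=
  metric_derivative_of_lipschitz_general L ρ hlip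
end

section
/- (The entropic interpolation solves the continuity equation, the key claim underlying equations (4), (5), (13), (14).) Let ε > 0 and let φ, ψ : (0,1) × E → ℝ be C² functions satisfying the forward and backward Hamilton–Jacobi–Bellman equations ∂_t φ = (1/2)‖∇φ‖² + (ε/2)Δφ and −∂_t ψ = (1/2)‖∇ψ‖² + (ε/2)Δψ pointwise on (0,1) × E, where ∇ and Δ are the spatial gradient and Laplacian. Define ρ(t,x) = exp((φ(t,x) + ψ(t,x))/ε) and v(t,x) = (∇ψ(t,x) − ∇φ(t,x))/2. Then the continuity equation ∂_t ρ(t,x) + div(ρ v)(t,x) = 0 holds for all (t,x) ∈ (0,1) × E, where div(ρ v) = ⟨∇ρ, v⟩ + ρ·(div v) and div v is the trace of the spatial derivative of v. -/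
open MeasureTheory

noncomputable section

/-- Spatial Laplacian: the trace of the second derivative. -/
def lap {d : ℕ} (f : E d → ℝ) (x : E d) : ℝ :=
  ∑ i : Fin d, iteratedFDeriv ℝ 2 f x
    ![EuclideanSpace.single i (1 : ℝ), EuclideanSpace.single i (1 : ℝ)]

/-- Divergence of a vector field: the trace of its derivative. -/
def divg {d : ℕ} (w : E d → E d) (x : E d) : ℝ :=
  ∑ i : Fin d, fderiv ℝ w x (EuclideanSpace.single i (1 : ℝ)) i

/-!
Write `ρ = exp ((φ + ψ) / ε)`. Then `∂ₜρ = ρ (∂ₜφ + ∂ₜψ) / ε` and `∇ρ = (ρ / ε) (∇φ + ∇ψ)`, so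
`⟪∇ρ, v⟫ = ρ (‖∇ψ‖² - ‖∇φ‖²) / (2ε)`; and since the divergence of a gradient is the Laplacian,
`div v = (Δψ - Δφ) / 2`. Substituting the two Hamilton–Jacobi–Bellman equations into `∂ₜρ`, the
squared gradients cancel against `⟪∇ρ, v⟫` and the Laplacians against `ρ div v`.
-/

open InnerProductSpace

section Gradient

variable {F : Type*} [NormedAddCommGroup F] [InnerProductSpace ℝ F] [CompleteSpace F]

lemma gradient_exp_add_div {f g : F → ℝ} {x : F} (hf : DifferentiableAt ℝ f x)
    (hg : DifferentiableAt ℝ g x) (c : ℝ) :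
    gradient (fun y => Real.exp ((f y + g y) / c)) x =
      (Real.exp ((f x + g x) / c) / c) • (gradient f x + gradient g x) := by
  apply (toDual ℝ F).injective
  simp only [toDual_gradient, map_smul, map_add, div_eq_mul_inv]
  rw [fderiv_exp (by fun_prop), fderiv_mul_const (hf.fun_add hg), fderiv_fun_add hf hg, smul_smul]

lemma fderiv_gradient_apply (f : F → ℝ) (x u : F) :
    fderiv ℝ (gradient f) x u = (toDual ℝ F).symm (fderiv ℝ (fderiv ℝ f) x u) := by
  change fderiv ℝ ((toDual ℝ F).symm ∘ fderiv ℝ f) x u = _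
  rw [LinearIsometryEquiv.comp_fderiv]
  rfl

lemma ContDiffAt.differentiableAt_gradient {f : F → ℝ} {x : F} (hf : ContDiffAt ℝ 2 f x) :
    DifferentiableAt ℝ (gradient f) x :=
  (toDual ℝ F).symm.differentiableAt.comp x
    ((hf.fderiv_right (m := 1) le_rfl).differentiableAt one_ne_zero)

end Gradient

lemma deriv_exp_add_div {a b : ℝ → ℝ} {t : ℝ} (ha : DifferentiableAt ℝ a t)
    (hb : DifferentiableAt ℝ b t) (c : ℝ) :
    deriv (fun s => Real.exp ((a s + b s) / c)) t =
      Real.exp ((a t + b t) / c) * ((deriv a t + deriv b t) / c) := by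
  rw [deriv_exp ((ha.fun_add hb).div_const c), deriv_div_const, deriv_fun_add ha hb]

lemma EuclideanSpace.toDual_symm_apply {ι : Type*} [Fintype ι] [DecidableEq ι]
    (L : StrongDual ℝ (EuclideanSpace ℝ ι)) (i : ι) :
    (toDual ℝ (EuclideanSpace ℝ ι)).symm L i = L (EuclideanSpace.single i 1) := by
  rw [← InnerProductSpace.toDual_symm_apply, EuclideanSpace.inner_single_right]
  simp

lemma divg_gradient {d : ℕ} (f : E d → ℝ) (x : E d) : divg (gradient f) x = lap f x := by
  refine Finset.sum_congr rfl fun i _ => ?_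
  rw [fderiv_gradient_apply, EuclideanSpace.toDual_symm_apply, iteratedFDeriv_two_apply]
  rfl

lemma divg_smul_sub {d : ℕ} {V W : E d → E d} {x : E d} (hV : DifferentiableAt ℝ V x)
    (hW : DifferentiableAt ℝ W x) (c : ℝ) :
    divg (fun y => c • (V y - W y)) x = c * (divg V x - divg W x) := by
  simp [divg, fderiv_fun_const_smul (hV.fun_sub hW), fderiv_fun_sub hV hW, Finset.mul_sum, mul_sub]

theorem entropic_interpolation_continuity_equation_general {d : ℕ}
    {ε : ℝ} (hε : 0 < ε)
    (φ ψ : ℝ × E d → ℝ) (hφ : ContDiff ℝ 2 φ) (hψ : ContDiff ℝ 2 ψ)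
    (hHJBφ : ∀ t ∈ Set.Ioo (0 : ℝ) 1, ∀ x : E d,
      deriv (fun s => φ (s, x)) t =
        (1 / 2) * ‖gradient (fun y => φ (t, y)) x‖ ^ 2 +
          (ε / 2) * lap (fun y => φ (t, y)) x)
    (hHJBψ : ∀ t ∈ Set.Ioo (0 : ℝ) 1, ∀ x : E d,
      -deriv (fun s => ψ (s, x)) t =
        (1 / 2) * ‖gradient (fun y => ψ (t, y)) x‖ ^ 2 +
          (ε / 2) * lap (fun y => ψ (t, y)) x)
    (ρ : ℝ × E d → ℝ) (hρ : ρ = fun r => Real.exp ((φ r + ψ r) / ε))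
    (v : ℝ × E d → E d)
    (hv : v = fun r => ((2 : ℝ)⁻¹) •
      (gradient (fun y => ψ (r.1, y)) r.2 - gradient (fun y => φ (r.1, y)) r.2)) :
    ∀ t ∈ Set.Ioo (0 : ℝ) 1, ∀ x : E d,
      deriv (fun s => ρ (s, x)) t +
        ((inner ℝ (gradient (fun y => ρ (t, y)) x) (v (t, x)) : ℝ) +
          ρ (t, x) * divg (fun y => v (t, y)) x) = 0 := by
  intro t ht x
  subst hρ hv
  have hf : ContDiff ℝ 2 (fun y => φ (t, y)) := hφ.comp (by fun_prop)
  have hg : ContDiff ℝ 2 (fun y => ψ (t, y)) := hψ.comp (by fun_prop)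
  have htime : DifferentiableAt ℝ (fun s : ℝ => (s, x)) t := by fun_prop
  have hφt : DifferentiableAt ℝ (fun s => φ (s, x)) t :=
    (hφ.differentiable two_ne_zero (t, x)).comp t htime
  have hψt : DifferentiableAt ℝ (fun s => ψ (s, x)) t :=
    (hψ.differentiable two_ne_zero (t, x)).comp t htime
  beta_reduce
  rw [deriv_exp_add_div hφt hψt,
    gradient_exp_add_div (hf.differentiable two_ne_zero x) (hg.differentiable two_ne_zero x),
    divg_smul_sub hg.contDiffAt.differentiableAt_gradient hf.contDiffAt.differentiableAt_gradient,
    divg_gradient, divg_gradient, real_inner_smul_left, real_inner_smul_right, inner_add_left,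
    inner_sub_right, inner_sub_right, real_inner_self_eq_norm_sq, real_inner_self_eq_norm_sq,
    real_inner_comm]
  have hφ' := hHJBφ t ht x
  have hψ' := hHJBψ t ht x
  field_simp
  linear_combination (2 * Real.exp ((φ (t, x) + ψ (t, x)) / ε)) * (hφ' - hψ')

theorem entropic_interpolation_continuity_equation {d : ℕ} (hd : 1 ≤ d)
    {ε : ℝ} (hε : 0 < ε)
    (φ ψ : ℝ × E d → ℝ) (hφ : ContDiff ℝ 2 φ) (hψ : ContDiff ℝ 2 ψ)
    (hHJBφ : ∀ t ∈ Set.Ioo (0 : ℝ) 1, ∀ x : E d,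
      deriv (fun s => φ (s, x)) t =
        (1 / 2) * ‖gradient (fun y => φ (t, y)) x‖ ^ 2 +
          (ε / 2) * lap (fun y => φ (t, y)) x)
    (hHJBψ : ∀ t ∈ Set.Ioo (0 : ℝ) 1, ∀ x : E d,
      -deriv (fun s => ψ (s, x)) t =
        (1 / 2) * ‖gradient (fun y => ψ (t, y)) x‖ ^ 2 +
          (ε / 2) * lap (fun y => ψ (t, y)) x)
    (ρ : ℝ × E d → ℝ) (hρ : ρ = fun r => Real.exp ((φ r + ψ r) / ε))
    (v : ℝ × E d → E d)
    (hv : v = fun r => ((2 : ℝ)⁻¹) •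
      (gradient (fun y => ψ (r.1, y)) r.2 - gradient (fun y => φ (r.1, y)) r.2)) :
    ∀ t ∈ Set.Ioo (0 : ℝ) 1, ∀ x : E d,
      deriv (fun s => ρ (s, x)) t +
        ((inner ℝ (gradient (fun y => ρ (t, y)) x) (v (t, x)) : ℝ) +
          ρ (t, x) * divg (fun y => v (t, y)) x) = 0 :=
  entropic_interpolation_continuity_equation_general hε φ ψ hφ hψ hHJBφ hHJBψ ρ hρ v hv
end
end
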